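/- arXiv:1907.06107 — 11 statements merged into one kernel-verified Lean document; each statement's English description precedes it below -/
import Mathlib

section
/- Let k be a field, A a commutative k-algebra with 1, V a k-linear subspace of A, and I an ideal of A with I ⊆ V. Then V is a Mathieu–Zhao space of A if and only if the image V/I of V in the quotient ring A/I is a Mathieu–Zhao space of A/I. -/
/-- `V` is a Mathieu–Zhao space of the commutative ring `A`: for every `a` in the radical
of `V` (i.e. `a ^ m ∈ V` for all sufficiently large `m`) and every `b ∈ A`, there is `N ≥ 1`
such that `b * a ^ m ∈ V` for all `m ≥ N`. -/
def IsMZ {A : Type*} [CommRing A] (V : Set A) : Prop :=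
  ∀ a : A, (∃ N : ℕ, 1 ≤ N ∧ ∀ m : ℕ, N ≤ m → a ^ m ∈ V) →
    ∀ b : A, ∃ N : ℕ, 1 ≤ N ∧ ∀ m : ℕ, N ≤ m → b * a ^ m ∈ V

theorem stmt_1 {k A : Type*} [Field k] [CommRing A] [Algebra k A]
    (V : Submodule k A) (I : Ideal A) (hIV : (I : Set A) ⊆ (V : Set A)) :
    IsMZ (V : Set A) ↔
      IsMZ ((V.map (Ideal.Quotient.mkₐ k I).toLinearMap : Submodule k (A ⧸ I)) :
        Set (A ⧸ I)) := by
  have key : ∀ x : A, Ideal.Quotient.mk I x ∈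
      V.map (Ideal.Quotient.mkₐ k I).toLinearMap ↔ x ∈ V := by
    intro x
    constructor
    · rintro ⟨y, hy, h⟩
      have hxy : x - y ∈ I := by
        have h' : Ideal.Quotient.mk I y = Ideal.Quotient.mk I x := h
        exact Ideal.Quotient.eq.mp h'.symm
      have := hIV hxy
      have : (x - y) + y ∈ V := V.add_mem this hy
      simpa using this
    · intro hx
      exact ⟨x, hx, rfl⟩
  constructor
  · intro hV aq haq bq
    obtain ⟨a, rfl⟩ := Ideal.Quotient.mk_surjective aq
    obtain ⟨b, rfl⟩ := Ideal.Quotient.mk_surjective bq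
    obtain ⟨N, hN1, hN⟩ := haq
    have ha : ∃ N : ℕ, 1 ≤ N ∧ ∀ m : ℕ, N ≤ m → a ^ m ∈ V := by
      refine ⟨N, hN1, fun m hm => ?_⟩
      have := hN m hm
      rw [← map_pow] at this
      exact (key _).mp this
    obtain ⟨M, hM1, hM⟩ := hV a ha b
    refine ⟨M, hM1, fun m hm => ?_⟩
    have := (key _).mpr (hM m hm)
    rwa [map_mul, map_pow] at this
  · intro hV a ha b
    have haq : ∃ N : ℕ, 1 ≤ N ∧ ∀ m : ℕ, N ≤ m →
        (Ideal.Quotient.mk I a) ^ m ∈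
          V.map (Ideal.Quotient.mkₐ k I).toLinearMap := by
      obtain ⟨N, hN1, hN⟩ := ha
      refine ⟨N, hN1, fun m hm => ?_⟩
      rw [← map_pow]
      exact (key _).mpr (hN m hm)
    obtain ⟨M, hM1, hM⟩ := hV _ haq (Ideal.Quotient.mk I b)
    refine ⟨M, hM1, fun m hm => ?_⟩
    have := hM m hm
    rw [← map_pow, ← map_mul] at this
    exact (key _).mp this
end

section
/- Idempotent theorem: Let k be a field, A an associative k-algebra with 1, and V a k-linear subspace of A such that every element of r(V) is algebraic over k. Then V is a left Mathieu–Zhao space of A if and only if for every idempotent e ∈ A with e ∈ V one has A·e ⊆ V. -/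
/-- `V` is a left Mathieu–Zhao space of `A`: for every `a` in the radical of `V`
(i.e. `a ^ m ∈ V` for all sufficiently large `m`) and every `b ∈ A`, there is `N ≥ 1`
such that `b * a ^ m ∈ V` for all `m ≥ N`. -/
def IsLeftMZ {A : Type*} [Ring A] (V : Set A) : Prop :=
  ∀ a : A, (∃ N : ℕ, 1 ≤ N ∧ ∀ m : ℕ, N ≤ m → a ^ m ∈ V) →
    ∀ b : A, ∃ N : ℕ, 1 ≤ N ∧ ∀ m : ℕ, N ≤ m → b * a ^ m ∈ V

open Polynomial

private lemma idem_pow {A : Type*} [Ring A] {e : A} (he : e * e = e) :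
    ∀ n : ℕ, 1 ≤ n → e ^ n = e := by
  intro n hn
  induction n with
  | zero => omega
  | succ m ih =>
    rcases Nat.eq_or_lt_of_le hn with h | h
    · rw [← h, pow_one]
    · have hm : 1 ≤ m := by omega
      rw [pow_succ, ih hm, he]

/-- The idempotent theorem. -/
theorem stmt_2 {k A : Type*} [Field k] [Ring A] [Algebra k A] (V : Submodule k A)
    (halg : ∀ a : A, (∃ N : ℕ, 1 ≤ N ∧ ∀ m : ℕ, N ≤ m → a ^ m ∈ V) → IsAlgebraic k a) :
    IsLeftMZ (V : Set A) ↔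
      ∀ e : A, e * e = e → e ∈ V → ∀ b : A, b * e ∈ V := by
  constructor
  · intro hMZ e hee heV b
    obtain ⟨N, hN1, hV⟩ := hMZ e ⟨1, le_refl 1, fun m hm => by
      rw [idem_pow hee m hm]; exact heV⟩ b
    have h := hV N (le_refl N)
    rwa [idem_pow hee N hN1] at h
  · rintro hIdem a ⟨N, hN1, haV⟩ b
    obtain ⟨p, hp0, hpa⟩ := halg a ⟨N, hN1, haV⟩
    set p₁ : k[X] := X * p with hp₁def
    have hp₁0 : p₁ ≠ 0 := mul_ne_zero X_ne_zero hp0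
    have hpa₁ : aeval a p₁ = 0 := by
      rw [hp₁def, map_mul, hpa, mul_zero]
    have hroot : p₁.IsRoot 0 := by simp [hp₁def]
    set s := p₁.rootMultiplicity 0 with hsdef
    have hs1 : 1 ≤ s := (rootMultiplicity_pos hp₁0).mpr hroot
    obtain ⟨q, hq, hqnd⟩ := p₁.exists_eq_pow_rootMultiplicity_mul_and_not_dvd hp₁0 0
    rw [map_zero, sub_zero] at hq hqnd
    have hcop : IsCoprime ((X : k[X]) ^ s) q :=
      ((Polynomial.irreducible_X.coprime_iff_not_dvd).mpr hqnd).pow_left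
    obtain ⟨u, v, huv⟩ := hcop
    set E := aeval a (u * X ^ s) with hEdef
    have key : ∀ w : k[X], ∀ m, N ≤ m → aeval a (w * X ^ m) ∈ V := by
      intro w
      induction w using Polynomial.induction_on' with
      | add f g hf hg =>
        intro m hm
        rw [add_mul, map_add]
        exact V.add_mem (hf m hm) (hg m hm)
      | monomial n c =>
        intro m hm
        have h1 : (monomial n c : k[X]) * X ^ m = C c * X ^ (n + m) := by
          rw [← C_mul_X_pow_eq_monomial, mul_assoc, ← pow_add]
        rw [h1, map_mul, aeval_C, map_pow, aeval_X, ← Algebra.smul_def]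
        exact V.smul_mem c (haV (n + m) (le_trans hm (Nat.le_add_left m n)))
    have h1 : E + aeval a (v * q) = 1 := by rw [← map_add, huv, map_one]
    have hE2 : E * aeval a (v * q) = 0 := by
      rw [hEdef, ← map_mul]
      have h : (u * X ^ s) * (v * q) = (u * v) * p₁ := by rw [hq]; ring
      rw [h, map_mul, hpa₁, mul_zero]
    have hEE : E * E = E := by
      have h := congrArg (fun x => E * x) h1
      simp only [mul_add, hE2, add_zero, mul_one] at h
      exact h
    have haE : a ^ s * E = a ^ s := by
      have h2 : a ^ s * aeval a (v * q) = 0 := by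
        have hx : a ^ s = aeval a ((X : k[X]) ^ s) := by simp
        rw [hx, ← map_mul]
        have h : ((X : k[X]) ^ s) * (v * q) = v * p₁ := by rw [hq]; ring
        rw [h, map_mul, hpa₁, mul_zero]
      have h := congrArg (fun x => a ^ s * x) h1
      simp only [mul_add, h2, add_zero, mul_one] at h
      exact h
    have hEV : E ∈ V := by
      have h : E = aeval a (u ^ N * X ^ (s * N)) := by
        rw [← idem_pow hEE N hN1, hEdef, ← map_pow, mul_pow, ← pow_mul]
      rw [h]
      exact key _ _ (le_trans (Nat.le_mul_of_pos_left N hs1) (le_refl _))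
    have hbE := hIdem E hEE hEV
    refine ⟨s, hs1, fun m hm => ?_⟩
    have hm' : a ^ m * E = a ^ m := by
      have hsplit : a ^ m = a ^ (m - s) * a ^ s := by
        rw [← pow_add]; congr 1; omega
      rw [hsplit, mul_assoc, haE]
    rw [show b * a ^ m = (b * a ^ m) * E from by rw [mul_assoc, hm']]
    exact hbE (b * a ^ m)
end

section
/- Let A = ℂ[t, t⁻¹] be the ring of Laurent polynomials and let m ∈ ℤ with m ≠ −1. Let V be the ℂ-linear subspace of A consisting of all Laurent polynomials whose coefficient of t^{−m−1} is zero (this is the image of the operator D_m = ∂_t + m·t⁻¹, since D_m(t^i) = (m+i)t^{i−1}). Then V is not a Mathieu–Zhao space of A. -/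
/-- For `m ∈ ℤ`, `m ≠ -1`, the subspace of the ring of complex Laurent polynomials
consisting of all Laurent polynomials whose coefficient of `t ^ (-m-1)` vanishes
(the image of `∂_t + m t⁻¹`) is not a Mathieu–Zhao space. -/
theorem stmt_4 (m : ℤ) (hm : m ≠ -1) :
    ¬ IsMZ {f : LaurentPolynomial ℂ | f.coeff (-m - 1) = 0} := by
  intro h
  have hc : (-m - 1 : ℤ) ≠ 0 := by omega
  obtain ⟨N, hN1, hN⟩ := h 1 ⟨1, le_rfl, fun n _ => by
    simp only [Set.mem_setOf_eq, one_pow]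
    rw [AddMonoidAlgebra.one_def, AddMonoidAlgebra.coeff_single, Finsupp.single_apply]
    simp [hc.symm]⟩ (LaurentPolynomial.T (-m - 1))
  have := hN N le_rfl
  simp only [Set.mem_setOf_eq, one_pow, mul_one, LaurentPolynomial.T_apply] at this
  simp at this
end

section
/- Let V = {f ∈ ℂ[t] : ∫₀^∞ e^{−t} f(t) dt = 0}. Then r(V) = 0, i.e. if f ∈ ℂ[t] satisfies ∫₀^∞ e^{−t} f(t)^m dt = 0 for all sufficiently large m, then f = 0. In particular V is a Mathieu–Zhao space of ℂ[t]. -/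
open MeasureTheory

open Polynomial Filter Finset Nat Topology

noncomputable def LL : Polynomial ℂ →+ ℂ where
  toFun p := p.sum fun n a => a * (n ! : ℂ)
  map_zero' := Polynomial.sum_zero_index _
  map_add' p q := Polynomial.sum_add_index p q (fun n a => a * (n ! : ℂ))
    (fun n => zero_mul _) (fun n a b => add_mul a b _)

lemma LL_apply (p : Polynomial ℂ) : LL p = p.sum fun n a => a * (n ! : ℂ) := rfl

lemma LL_monomial (n : ℕ) (a : ℂ) : LL (monomial n a) = a * (n ! : ℂ) :=
  Polynomial.sum_monomial_index a (fun n a => a * (n ! : ℂ)) (zero_mul _)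

lemma LL_C_mul (a : ℂ) (p : Polynomial ℂ) : LL (C a * p) = a * LL p := by
  rw [← Polynomial.smul_eq_C_mul, LL_apply, LL_apply,
    Polynomial.sum_smul_index p a (fun n a => a * (n ! : ℂ)) (fun n => zero_mul _),
    Polynomial.sum_def, Polynomial.sum_def, Finset.mul_sum]
  exact Finset.sum_congr rfl fun i _ => by ring

lemma integrable_exp_neg_pow (n : ℕ) :
    IntegrableOn (fun t : ℝ => Real.exp (-t) * t ^ n) (Set.Ioi 0) := by
  have h := Real.GammaIntegral_convergent (s := n + 1) (by positivity)
  refine h.congr_fun ?_ measurableSet_Ioi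
  intro x hx
  simp only
  rw [show ((n : ℝ) + 1 - 1) = (n : ℝ) by ring, Real.rpow_natCast]

lemma integral_exp_neg_pow (n : ℕ) :
    ∫ t in Set.Ioi (0 : ℝ), Real.exp (-t) * t ^ n = (n ! : ℝ) := by
  have h := Real.Gamma_eq_integral (s := n + 1) (by positivity)
  rw [Real.Gamma_nat_eq_factorial] at h
  have e : Set.EqOn (fun t : ℝ => Real.exp (-t) * t ^ n)
      (fun x : ℝ => Real.exp (-x) * x ^ ((n : ℝ) + 1 - 1)) (Set.Ioi 0) := by
    intro x hx
    simp only
    rw [show ((n : ℝ) + 1 - 1) = (n : ℝ) by ring, Real.rpow_natCast]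
  rw [setIntegral_congr_fun measurableSet_Ioi e]
  exact h.symm

lemma integral_L (p : Polynomial ℂ) :
    (∫ t in Set.Ioi (0:ℝ), Real.exp (-t) • Polynomial.eval (t:ℂ) p) = LL p := by
  have h1 : ∀ t : ℝ, Real.exp (-t) • Polynomial.eval (t:ℂ) p
      = ∑ i ∈ range (p.natDegree+1), p.coeff i * ((Real.exp (-t) * t ^ i : ℝ) : ℂ) := by
    intro t
    rw [Polynomial.eval_eq_sum_range, Finset.smul_sum]
    refine Finset.sum_congr rfl fun i _ => ?_
    rw [Complex.real_smul]
    push_cast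
    ring
  simp_rw [h1]
  have hint : ∀ i ∈ range (p.natDegree+1), Integrable
      (fun t : ℝ => p.coeff i * ((Real.exp (-t) * t ^ i : ℝ) : ℂ)) (volume.restrict (Set.Ioi 0)) :=
    fun i _ => (integrable_exp_neg_pow i).ofReal.const_mul (p.coeff i)
  rw [integral_finset_sum (range (p.natDegree+1)) hint]
  have h2 : ∀ i, (∫ t in Set.Ioi (0:ℝ), p.coeff i * ((Real.exp (-t) * t ^ i : ℝ) : ℂ))
      = p.coeff i * ((i ! : ℕ) : ℂ) := by
    intro i
    rw [MeasureTheory.integral_const_mul]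
    have hio : (∫ a in Set.Ioi (0:ℝ), ((Real.exp (-a) * a ^ i : ℝ) : ℂ)) = ((i ! : ℝ) : ℂ) := by
      rw [← integral_exp_neg_pow i]; exact integral_ofReal
    rw [hio]
    norm_num
  simp_rw [h2]
  rw [LL_apply, Polynomial.sum_over_range (f := fun n a => a * (n ! : ℂ)) p (fun n => zero_mul _)]

noncomputable def absP (p : Polynomial ℂ) : Polynomial ℝ := ⟨AddMonoidAlgebra.ofCoeff (p.toFinsupp.coeff.mapRange norm norm_zero)⟩

lemma coeff_absP (p : Polynomial ℂ) (n : ℕ) : (absP p).coeff n = ‖p.coeff n‖ := rfl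

def Dom (p : Polynomial ℂ) (P : Polynomial ℝ) : Prop := ∀ n, ‖p.coeff n‖ ≤ P.coeff n

lemma dom_absP (p : Polynomial ℂ) : Dom p (absP p) := fun n => le_of_eq (coeff_absP p n).symm

lemma Dom.coeff_nonneg {p P} (h : Dom p P) (n : ℕ) : 0 ≤ P.coeff n :=
  (norm_nonneg _).trans (h n)

lemma Dom.mul {p q P Q} (h1 : Dom p P) (h2 : Dom q Q) : Dom (p * q) (P * Q) := by
  intro n
  rw [Polynomial.coeff_mul, Polynomial.coeff_mul]
  refine (norm_sum_le _ _).trans (Finset.sum_le_sum fun x _ => ?_)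
  rw [norm_mul]
  exact mul_le_mul (h1 _) (h2 _) (norm_nonneg _) (h1.coeff_nonneg _)

lemma Dom.pow {p P} (h : Dom p P) (k : ℕ) : Dom (p ^ k) (P ^ k) := by
  induction k with
  | zero => intro n; simp [Polynomial.coeff_one]; split <;> simp
  | succ k ih => rw [pow_succ, pow_succ]; exact ih.mul h

lemma sum_coeff_le_eval_one (P : Polynomial ℝ) (h : ∀ n, 0 ≤ P.coeff n) (n : ℕ) :
    ∑ i ∈ range n, P.coeff i ≤ P.eval 1 := by
  have he : P.eval 1 = ∑ i ∈ range (max n (P.natDegree + 1)), P.coeff i := by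
    rw [Polynomial.eval_eq_sum_range' (n := max n (P.natDegree + 1)) (lt_of_lt_of_le (Nat.lt_succ_self _) (le_max_right _ _))]
    simp
  rw [he]
  exact Finset.sum_le_sum_of_subset_of_nonneg
    (Finset.range_subset_range.2 (le_max_left _ _)) (fun i _ _ => h i)

lemma l1_pow_le (g : Polynomial ℂ) (k n : ℕ) :
    ∑ i ∈ range n, ‖(g ^ k).coeff i‖ ≤ (absP g).eval 1 ^ k :=
  calc ∑ i ∈ range n, ‖(g ^ k).coeff i‖ ≤ ∑ i ∈ range n, ((absP g) ^ k).coeff i :=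
        Finset.sum_le_sum fun i _ => (dom_absP g).pow k i
    _ ≤ ((absP g) ^ k).eval 1 :=
        sum_coeff_le_eval_one _ (((dom_absP g).pow k).coeff_nonneg) n
    _ = (absP g).eval 1 ^ k := by rw [Polynomial.eval_pow]

lemma coeff_le_eval_one_absP (g : Polynomial ℂ) (i : ℕ) : ‖g.coeff i‖ ≤ (absP g).eval 1 := by
  have h := l1_pow_le g 1 (i + 1)
  simp only [pow_one] at h
  refine le_trans ?_ h
  exact Finset.single_le_sum (f := fun j => ‖g.coeff j‖) (fun j _ => norm_nonneg _)
    (Finset.self_mem_range_succ i)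

lemma LL_X_pow_mul (e : ℕ) (h : Polynomial ℂ) (n : ℕ) (hn : h.natDegree < n) :
    LL (X ^ e * h) = ∑ i ∈ range n, h.coeff i * (((e + i)! : ℕ) : ℂ) := by
  conv_lhs => rw [Polynomial.as_sum_range' h n hn, Finset.mul_sum]
  rw [map_sum]
  refine Finset.sum_congr rfl fun i _ => ?_
  rw [Polynomial.X_pow_eq_monomial, Polynomial.monomial_mul_monomial, one_mul, LL_monomial]

lemma natDegree_sub_X_pow_le (f : Polynomial ℂ) (hm : f.Monic) (d : ℕ) (hd : f.natDegree = d) :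
    (f - X ^ d).natDegree ≤ d - 1 := by
  rw [Polynomial.natDegree_le_iff_coeff_eq_zero]
  intro N hN
  rw [Polynomial.coeff_sub, Polynomial.coeff_X_pow]
  rcases eq_or_lt_of_le (show d ≤ N by omega) with h | h
  · rw [← h, if_pos rfl]
    have hc : f.coeff d = 1 := by
      have := hm.coeff_natDegree
      rwa [hd] at this
    rw [hc]; ring
  · rw [Polynomial.coeff_eq_zero_of_natDegree_lt (by omega), if_neg (by omega)]
    simp

lemma LL_pow_expand (f : Polynomial ℂ) (hm : f.Monic) (d : ℕ) (hd : f.natDegree = d)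
    (hd1 : 1 ≤ d) (m : ℕ) :
    LL (f ^ m) = ∑ k ∈ range (m + 1), (m.choose k : ℂ) *
      ∑ i ∈ range ((d - 1) * k + 1),
        ((f - X ^ d) ^ k).coeff i * (((d * (m - k) + i)! : ℕ) : ℂ) := by
  set g := f - X ^ d with hg
  have hfg : f = g + X ^ d := by ring
  have hdeg : ∀ k, (g ^ k).natDegree < (d - 1) * k + 1 := by
    intro k
    have h1 : (g ^ k).natDegree ≤ k * g.natDegree := Polynomial.natDegree_pow_le
    have h2 : g.natDegree ≤ d - 1 := natDegree_sub_X_pow_le f hm d hd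
    have h3 := le_trans h1 (Nat.mul_le_mul_left k h2)
    have h4 : k * (d - 1) = (d - 1) * k := mul_comm _ _
    omega
  conv_lhs => rw [hfg, add_pow]
  rw [map_sum]
  refine Finset.sum_congr rfl fun k hk => ?_
  have he : (X ^ d : Polynomial ℂ) ^ (m - k) = X ^ (d * (m - k)) := by rw [← pow_mul]
  have : g ^ k * (X ^ d) ^ (m - k) * (m.choose k : Polynomial ℂ)
      = C (m.choose k : ℂ) * (X ^ (d * (m - k)) * g ^ k) := by
    rw [he, Polynomial.C_eq_natCast]
    ring
  rw [this, LL_C_mul, LL_X_pow_mul _ _ _ (hdeg k)]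

lemma descFactorial_pos' {n k : ℕ} (h : k ≤ n) : 0 < n.descFactorial k := by
  rcases Nat.eq_zero_or_pos (n.descFactorial k) with h0 | h0
  · exfalso
    have := Nat.factorial_mul_descFactorial h
    rw [h0, mul_zero] at this
    exact (Nat.factorial_pos n).ne' this.symm
  · exact h0

lemma descF_le_descF {m k N j : ℕ} (hkj : k ≤ j) (hjN : j ≤ N) (hmN : m ≤ N) :
    m.descFactorial k ≤ N.descFactorial j := by
  rw [Nat.descFactorial_eq_prod_range, Nat.descFactorial_eq_prod_range]
  calc ∏ r ∈ range k, (m - r) ≤ ∏ r ∈ range k, (N - r) :=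
        Finset.prod_le_prod' fun r _ => by omega
    _ ≤ ∏ r ∈ range j, (N - r) :=
        Finset.prod_le_prod_of_subset_of_one_le' (Finset.range_subset_range.2 hkj)
          (fun r hr _ => by simp only [Finset.mem_range] at hr; omega)

section
variable {d k m i : ℕ}

lemma aux_facts (hd : 1 ≤ d) (hk : k ≤ m) (hi : i ≤ (d-1)*k) :
    i ≤ d * k ∧ k ≤ d * k - i ∧ d * k - i ≤ d * m ∧ d * (m - k) + d * k = d * m ∧
      d * m - (d * k - i) = d * (m - k) + i := by
  have h1 : (d-1)*k + k = d*k := by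
    have : d - 1 + 1 = d := by omega
    calc (d-1)*k + k = ((d-1)+1)*k := by ring
      _ = d*k := by rw [this]
  have h2 : d * (m - k) + d * k = d * m := by rw [← Nat.mul_add, Nat.sub_add_cancel hk]
  omega

lemma nat_key (hd : 1 ≤ d) (hk : k ≤ m) (hi : i ≤ (d-1)*k) :
    k ! * m.choose k * (d*(m-k)+i)! ≤ (d*m)! := by
  obtain ⟨hA, hB, hC, hD, hE⟩ := aux_facts hd hk hi
  have h2 : (d*(m-k)+i)! * (d*m).descFactorial (d*k-i) = (d*m)! := by
    have h := Nat.factorial_mul_descFactorial (n := d*m) (k := d*k - i) hC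
    rwa [hE] at h
  have h3 : m.descFactorial k ≤ (d*m).descFactorial (d*k-i) := by
    refine descF_le_descF hB hC ?_
    have : 1 * m ≤ d * m := Nat.mul_le_mul_right m hd
    omega
  calc k ! * m.choose k * (d*(m-k)+i)! = m.descFactorial k * (d*(m-k)+i)! := by
        rw [← Nat.descFactorial_eq_factorial_mul_choose]
    _ ≤ (d*m).descFactorial (d*k-i) * (d*(m-k)+i)! := Nat.mul_le_mul_right _ h3
    _ = (d*m)! := by rw [mul_comm]; exact h2

lemma ratio_le (hd : 1 ≤ d) (hk : k ≤ m) (hi : i ≤ (d-1)*k) :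
    (m.choose k : ℝ) * ((d*(m-k)+i)! : ℝ) / ((d*m)! : ℝ) ≤ 1 / (k ! : ℝ) := by
  rw [div_le_div_iff₀ (by positivity) (by positivity)]
  have := nat_key hd hk hi
  calc (m.choose k : ℝ) * ((d*(m-k)+i)! : ℝ) * (k ! : ℝ)
      = ((k ! * m.choose k * (d*(m-k)+i)! : ℕ) : ℝ) := by push_cast; ring
    _ ≤ ((d*m)! : ℝ) := by exact_mod_cast this
    _ = 1 * ((d*m)! : ℝ) := (one_mul _).symm

lemma ratio_eq (hd : 1 ≤ d) (hk : k ≤ m) (hi : i ≤ (d-1)*k) :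
    (m.choose k : ℝ) * ((d*(m-k)+i)! : ℝ) / ((d*m)! : ℝ)
      = (m.descFactorial k : ℝ) / ((k ! : ℝ) * ((d*m).descFactorial (d*k - i) : ℝ)) := by
  obtain ⟨hA, hB, hC, hD, hE⟩ := aux_facts hd hk hi
  have h2 : (d*(m-k)+i)! * (d*m).descFactorial (d*k-i) = (d*m)! := by
    have h := Nat.factorial_mul_descFactorial (n := d*m) (k := d*k - i) hC
    rwa [hE] at h
  have hdpos : 0 < (d*m).descFactorial (d*k-i) := descFactorial_pos' hC
  rw [div_eq_div_iff (by positivity) (by positivity)]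
  have natid : m.choose k * (d*(m-k)+i)! * (k ! * (d*m).descFactorial (d*k-i))
      = m.descFactorial k * (d*m)! := by
    rw [Nat.descFactorial_eq_factorial_mul_choose m k, ← h2]
    ring
  have h := congrArg (fun n : ℕ => (n : ℝ)) natid
  push_cast at h ⊢
  linear_combination h
end

lemma tendsto_ratio_fac (d : ℕ) (hd : 1 ≤ d) (r : ℕ) :
    Tendsto (fun m : ℕ => ((m:ℝ) - r)/((d:ℝ)*m - r)) atTop (𝓝 (1/(d:ℝ))) := by
  have hd0 : (d:ℝ) ≠ 0 := by positivity
  have h1 : Tendsto (fun m : ℕ => 1 - (r:ℝ)/m) atTop (𝓝 1) := by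
    simpa using tendsto_const_nhds.sub (tendsto_const_div_atTop_nhds_zero_nat (r:ℝ))
  have h2 : Tendsto (fun m : ℕ => (d:ℝ) - (r:ℝ)/m) atTop (𝓝 (d:ℝ)) := by
    simpa using tendsto_const_nhds.sub (tendsto_const_div_atTop_nhds_zero_nat (r:ℝ))
  have h3 := h1.div h2 hd0
  rw [one_div] at h3 ⊢
  refine h3.congr' ?_
  filter_upwards [eventually_gt_atTop 0] with m hm
  have hm0 : (m:ℝ) ≠ 0 := Nat.cast_ne_zero.2 hm.ne'
  have e1 : (1 - (r:ℝ)/m) = ((m:ℝ) - r)/m := by field_simp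
  have e2 : ((d:ℝ) - (r:ℝ)/m) = ((d:ℝ)*m - r)/m := by
    rw [sub_div, mul_div_assoc, div_self hm0, mul_one]
  simp only [Pi.div_apply]
  rw [e1, e2, div_div_div_cancel_right₀ hm0]

lemma tendsto_inv_lin (d : ℕ) (hd : 1 ≤ d) (s : ℕ) :
    Tendsto (fun m : ℕ => (((d:ℝ)*m - s))⁻¹) atTop (𝓝 0) := by
  apply tendsto_inv_atTop_zero.comp
  apply tendsto_atTop_add_const_right
  exact Tendsto.const_mul_atTop (by positivity) tendsto_natCast_atTop_atTop

lemma lim_descF (d k j : ℕ) (hd : 1 ≤ d) (hkj : k ≤ j) :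
    Tendsto (fun m : ℕ => (m.descFactorial k : ℝ) / ((d*m).descFactorial j : ℝ)) atTop
      (𝓝 (if j = k then ((1:ℝ)/(d:ℝ))^k else 0)) := by
  have h1 : Tendsto (fun m : ℕ => ∏ r ∈ range k, (((m:ℝ) - r)/((d:ℝ)*m - r))) atTop
      (𝓝 ((1/(d:ℝ))^k)) := by
    have := tendsto_finset_prod (range k) (fun r (_ : r ∈ range k) => tendsto_ratio_fac d hd r)
    simpa using this
  have h2 : Tendsto (fun m : ℕ => ∏ s ∈ Ico k j, (((d:ℝ)*m - s)⁻¹)) atTop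
      (𝓝 (if j = k then 1 else 0)) := by
    rcases eq_or_lt_of_le hkj with rfl | hlt
    · simp
    · rw [if_neg (by omega)]
      have := tendsto_finset_prod (Ico k j) (fun s (_ : s ∈ Ico k j) => tendsto_inv_lin d hd s)
      rwa [Finset.prod_eq_zero (Finset.mem_Ico.2 ⟨le_refl k, hlt⟩) rfl] at this
  have hF := h1.mul h2
  have hlimeq : (1/(d:ℝ))^k * (if j = k then (1:ℝ) else 0) = (if j = k then ((1:ℝ)/(d:ℝ))^k else 0) := by
    split <;> ring
  rw [hlimeq] at hF
  refine hF.congr' ?_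
  filter_upwards [eventually_ge_atTop j] with m hm
  have hkm : k ≤ m := le_trans hkj hm
  have hc1 : (m.descFactorial k : ℝ) = ∏ r ∈ range k, ((m:ℝ) - r) := by
    rw [Nat.descFactorial_eq_prod_range, Nat.cast_prod]
    exact Finset.prod_congr rfl fun r hr => by
      rw [Nat.cast_sub (le_of_lt (lt_of_lt_of_le (Finset.mem_range.1 hr) hkm))]
  have hc2 : (((d*m).descFactorial j : ℕ) : ℝ) = ∏ s ∈ range j, ((d:ℝ)*m - s) := by
    rw [Nat.descFactorial_eq_prod_range, Nat.cast_prod]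
    refine Finset.prod_congr rfl fun s hs => ?_
    have hs' : s ≤ d * m := by
      have h1m : 1 * m ≤ d * m := Nat.mul_le_mul_right m hd
      have := Finset.mem_range.1 hs
      omega
    rw [Nat.cast_sub hs']
    push_cast
    ring
  rw [Finset.prod_div_distrib, Finset.prod_inv_distrib, hc1, hc2,
    ← Finset.prod_range_mul_prod_Ico _ hkj, ← div_eq_mul_inv, div_div]

lemma eventually_LL_pow_ne (f : Polynomial ℂ) (hmo : f.Monic) (hd : 1 ≤ f.natDegree) :
    ∀ᶠ m in atTop, LL (f ^ m) ≠ 0 := by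
  set d := f.natDegree with hdd
  set g := f - X ^ d with hgdef
  set G : ℝ := (absP g).eval 1 with hGdef
  set β : ℂ := g.coeff (d - 1) with hβdef
  have hGnonneg : 0 ≤ G := by
    have := l1_pow_le g 1 1
    simp only [pow_one] at this
    refine le_trans ?_ this
    positivity
  have hdc : (d:ℂ) ≠ 0 := by
    have : d ≠ 0 := by omega
    exact_mod_cast this
  have hgd : g.natDegree ≤ d - 1 := natDegree_sub_X_pow_le f hmo d rfl
  have hdk1 : ∀ k : ℕ, (d-1)*k + k = d*k := by
    intro k
    have hdk : d - 1 + 1 = d := by omega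
    calc (d-1)*k + k = ((d-1)+1)*k := by ring
      _ = d*k := by rw [hdk]
  set T : ℕ → ℕ → ℂ := fun k m => (m.choose k : ℂ) *
      ∑ i ∈ range ((d - 1) * k + 1),
        (g ^ k).coeff i * ((((d * (m - k) + i)! : ℕ) : ℂ) / (((d * m)! : ℕ) : ℂ)) with hTdef
  have hfactne : ∀ m : ℕ, (((d * m)! : ℕ) : ℂ) ≠ 0 := by
    intro m; exact_mod_cast (Nat.factorial_pos (d*m)).ne'
  have hA : ∀ m : ℕ, LL (f ^ m) / (((d * m)! : ℕ) : ℂ) = ∑ k ∈ range (m + 1), T k m := by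
    intro m
    rw [LL_pow_expand f hmo d rfl hd m, Finset.sum_div]
    refine Finset.sum_congr rfl fun k _ => ?_
    rw [mul_div_assoc, Finset.sum_div]
    congr 1
    exact Finset.sum_congr rfl fun i _ => by rw [mul_div_assoc]
  have hT_bound : ∀ k m : ℕ, k ≤ m → ‖T k m‖ ≤ G ^ k / (k ! : ℝ) := by
    intro k m hk
    have h1 : ‖T k m‖ ≤ ∑ i ∈ range ((d - 1) * k + 1),
        ‖(g ^ k).coeff i‖ * ((m.choose k : ℝ) * (((d * (m - k) + i)! : ℕ) : ℝ) / (((d * m)! : ℕ) : ℝ)) := by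
      rw [hTdef]
      simp only
      rw [norm_mul, Complex.norm_natCast]
      refine le_trans (mul_le_mul_of_nonneg_left (norm_sum_le _ _) (by positivity)) ?_
      rw [Finset.mul_sum]
      refine Finset.sum_le_sum fun i _ => ?_
      refine le_of_eq ?_
      rw [norm_mul, norm_div, Complex.norm_natCast, Complex.norm_natCast]
      ring
    refine h1.trans ?_
    have h2 : ∀ i ∈ range ((d - 1) * k + 1),
        ‖(g ^ k).coeff i‖ * ((m.choose k : ℝ) * (((d * (m - k) + i)! : ℕ) : ℝ) / (((d * m)! : ℕ) : ℝ))
          ≤ ‖(g ^ k).coeff i‖ * (1 / (k ! : ℝ)) := by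
      intro i hi
      refine mul_le_mul_of_nonneg_left ?_ (norm_nonneg _)
      exact ratio_le (by omega) hk (by simpa using Nat.lt_succ_iff.1 (Finset.mem_range.1 hi))
    refine (Finset.sum_le_sum h2).trans ?_
    rw [← Finset.sum_mul, div_eq_mul_one_div (G^k) _]
    exact mul_le_mul_of_nonneg_right (l1_pow_le g k _) (by positivity)
  have hT_lim : ∀ k : ℕ, Tendsto (fun m => T k m) atTop (𝓝 ((β / (d:ℂ)) ^ k / (k ! : ℂ))) := by
    intro k
    set Λ : ℕ → ℂ := fun i => (g ^ k).coeff i *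
      ((((if d*k - i = k then ((1:ℝ)/(d:ℝ))^k else 0) * (1/(k ! : ℝ)) : ℝ)) : ℂ) with hΛdef
    have hTeq : ∀ m, T k m = ∑ i ∈ range ((d - 1) * k + 1),
        (g ^ k).coeff i * ((m.choose k : ℂ) * ((((d * (m - k) + i)! : ℕ) : ℂ) / (((d * m)! : ℕ) : ℂ))) := by
      intro m
      rw [hTdef]
      simp only
      rw [Finset.mul_sum]
      exact Finset.sum_congr rfl fun i _ => by ring
    have hterm : ∀ i ∈ range ((d - 1) * k + 1),
        Tendsto (fun m : ℕ => (g ^ k).coeff i *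
          ((m.choose k : ℂ) * ((((d * (m - k) + i)! : ℕ) : ℂ) / (((d * m)! : ℕ) : ℂ)))) atTop (𝓝 (Λ i)) := by
      intro i hi
      have hik : i ≤ (d-1)*k := by simpa using Nat.lt_succ_iff.1 (Finset.mem_range.1 hi)
      have hki : k ≤ d*k - i := by have := hdk1 k; omega
      have hreal : Tendsto (fun m : ℕ =>
          ((m.descFactorial k : ℝ) / ((d*m).descFactorial (d*k - i) : ℝ)) * (1/(k ! : ℝ))) atTop
          (𝓝 ((if d*k - i = k then ((1:ℝ)/(d:ℝ))^k else 0) * (1/(k ! : ℝ)))) :=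
        (lim_descF d k (d*k-i) (by omega) hki).mul_const _
      have hcx := (Complex.continuous_ofReal.tendsto _).comp hreal
      have hcongr : ∀ᶠ m : ℕ in atTop,
          ((((m.descFactorial k : ℝ) / (((d*m).descFactorial (d*k - i)) : ℝ)) * (1/(k ! : ℝ)) : ℝ) : ℂ)
          = (m.choose k : ℂ) * ((((d * (m - k) + i)! : ℕ) : ℂ) / (((d * m)! : ℕ) : ℂ)) := by
        filter_upwards [eventually_ge_atTop k] with m hkm
        have hre := ratio_eq (d := d) (k := k) (m := m) (i := i) (by omega) hkm hik
        have hkf : (k ! : ℝ) ≠ 0 := by positivity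
        have hdf : ((d*m).descFactorial (d*k - i) : ℝ) ≠ 0 := by
          have h0 : 0 < (d*m).descFactorial (d*k - i) := by
            rcases Nat.eq_zero_or_pos ((d*m).descFactorial (d*k - i)) with h0 | h0
            · exfalso
              have hC : d*k - i ≤ d*m := by
                have h1 : d*k ≤ d*m := Nat.mul_le_mul_left d hkm
                omega
              have := Nat.factorial_mul_descFactorial hC
              rw [h0, mul_zero] at this
              exact (Nat.factorial_pos _).ne' this.symm
            · exact h0
          exact_mod_cast h0.ne'
        have e1 : (m.descFactorial k : ℝ) / (((d*m).descFactorial (d*k - i)) : ℝ) * (1/(k ! : ℝ))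
            = (m.choose k : ℝ) * ((d*(m-k)+i)! : ℝ) / ((d*m)! : ℝ) := by
          rw [hre, mul_one_div, div_div, mul_comm ((((d*m).descFactorial (d*k - i)) : ℝ)) ((k ! : ℝ))]
        rw [e1]
        push_cast
        ring
      exact (hcx.congr' hcongr).const_mul ((g ^ k).coeff i)
    have hsum := tendsto_finset_sum (range ((d - 1) * k + 1)) hterm
    have hsum_eval : ∑ i ∈ range ((d-1)*k+1), Λ i = (β/(d:ℂ))^k / (k ! : ℂ) := by
      rw [Finset.sum_eq_single_of_mem ((d-1)*k) (Finset.self_mem_range_succ _)]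
      · have htop : d*k - (d-1)*k = k := by have := hdk1 k; omega
        rw [hΛdef]
        simp only
        rw [htop, if_pos rfl]
        have hc : (g^k).coeff ((d-1)*k) = β^k := by
          have := Polynomial.coeff_pow_of_natDegree_le (p := g) (n := d-1) (m := k) hgd
          rwa [mul_comm k (d-1)] at this
        rw [hc]
        have hkf : ((k ! : ℕ) : ℂ) ≠ 0 := by exact_mod_cast (Nat.factorial_pos k).ne'
        push_cast
        rw [div_pow]
        field_simp
        rw [one_pow, mul_one, ← mul_pow, show (d:ℂ) * (β / d) = β by field_simp]
      · intro i hi hne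
        have hik : i ≤ (d-1)*k := by simpa using Nat.lt_succ_iff.1 (Finset.mem_range.1 hi)
        have : d*k - i ≠ k := by have := hdk1 k; omega
        rw [hΛdef]
        simp only
        rw [if_neg this]
        simp
    rw [hsum_eval] at hsum
    exact (hsum.congr (fun m => (hTeq m).symm))
  -- final assembly
  set E : ℂ := Complex.exp (β / (d:ℂ)) with hEdef
  have hhs : HasSum (fun k : ℕ => (β/(d:ℂ))^k / (k ! : ℂ)) E := by
    rw [hEdef, Complex.exp_eq_exp_ℂ]
    exact NormedSpace.expSeries_div_hasSum_exp (β/(d:ℂ))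
  have hδ : 0 < ‖E‖ := norm_pos_iff.2 (Complex.exp_ne_zero _)
  have hsumG : Summable (fun k : ℕ => G^k / (k ! : ℝ)) := Real.summable_pow_div_factorial G
  set S := ∑' k : ℕ, G^k/(k ! : ℝ) with hSdef
  have h1 : Tendsto (fun K => ∑ k ∈ range K, (β/(d:ℂ))^k / (k ! : ℂ)) atTop (𝓝 E) :=
    hhs.tendsto_sum_nat
  have h2 : Tendsto (fun K => ∑ k ∈ range K, G^k/(k ! : ℝ)) atTop (𝓝 S) :=
    hsumG.hasSum.tendsto_sum_nat
  obtain ⟨K, hK1, hK2⟩ := ((h1.eventually (Metric.ball_mem_nhds E (by positivity : (0:ℝ) < ‖E‖/4))).and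
    (h2.eventually (Metric.ball_mem_nhds S (by positivity : (0:ℝ) < ‖E‖/4)))).exists
  simp only [Metric.mem_ball, dist_eq_norm] at hK1
  simp only [Metric.mem_ball, Real.dist_eq] at hK2
  have hhead : Tendsto (fun m => ∑ k ∈ range K, T k m) atTop
      (𝓝 (∑ k ∈ range K, (β/(d:ℂ))^k / (k ! : ℂ))) :=
    tendsto_finset_sum _ (fun k _ => hT_lim k)
  have hev := hhead.eventually (Metric.ball_mem_nhds _ (show (0:ℝ) < ‖E‖/4 by positivity))
  filter_upwards [hev, eventually_ge_atTop K] with m hm1 hm2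
  simp only [Metric.mem_ball, dist_eq_norm] at hm1
  intro hLL0
  have hAm : (0:ℂ) = ∑ k ∈ range (m+1), T k m := by rw [← hA m, hLL0, zero_div]
  have hsplit : ∑ k ∈ range (m+1), T k m
      = ∑ k ∈ range K, T k m + ∑ k ∈ Ico K (m+1), T k m :=
    (Finset.sum_range_add_sum_Ico _ (by omega)).symm
  have htailnorm : ‖∑ k ∈ Ico K (m+1), T k m‖ < ‖E‖/4 := by
    have hb : ‖∑ k ∈ Ico K (m+1), T k m‖ ≤ ∑ k ∈ Ico K (m+1), G^k/(k ! : ℝ) := by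
      refine (norm_sum_le _ _).trans (Finset.sum_le_sum fun k hk => ?_)
      exact hT_bound k m (by have := (Finset.mem_Ico.1 hk).2; omega)
    refine lt_of_le_of_lt hb ?_
    rw [Finset.sum_Ico_eq_sub _ (by omega : K ≤ m + 1)]
    have hle : ∑ k ∈ range (m+1), G^k/(k ! : ℝ) ≤ S :=
      Summable.sum_le_tsum _ (fun b _ => by positivity) hsumG
    have := abs_lt.1 hK2
    linarith
  have hEeq : E = (E - ∑ k ∈ range K, (β/(d:ℂ))^k / (k ! : ℂ))
      + ((∑ k ∈ range K, (β/(d:ℂ))^k / (k ! : ℂ)) - ∑ k ∈ range K, T k m)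
      - ∑ k ∈ Ico K (m+1), T k m := by
    have h0 : ∑ k ∈ range K, T k m + ∑ k ∈ Ico K (m+1), T k m = 0 := by
      rw [← hsplit, ← hAm]
    linear_combination h0
  have hcontr : ‖E‖ < 3 * (‖E‖/4) := by
    calc ‖E‖ = ‖(E - ∑ k ∈ range K, (β/(d:ℂ))^k / (k ! : ℂ))
        + ((∑ k ∈ range K, (β/(d:ℂ))^k / (k ! : ℂ)) - ∑ k ∈ range K, T k m)
        - ∑ k ∈ Ico K (m+1), T k m‖ := by rw [← hEeq]
      _ ≤ ‖(E - ∑ k ∈ range K, (β/(d:ℂ))^k / (k ! : ℂ))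
        + ((∑ k ∈ range K, (β/(d:ℂ))^k / (k ! : ℂ)) - ∑ k ∈ range K, T k m)‖
        + ‖∑ k ∈ Ico K (m+1), T k m‖ := norm_sub_le _ _
      _ ≤ ‖E - ∑ k ∈ range K, (β/(d:ℂ))^k / (k ! : ℂ)‖
        + ‖(∑ k ∈ range K, (β/(d:ℂ))^k / (k ! : ℂ)) - ∑ k ∈ range K, T k m‖
        + ‖∑ k ∈ Ico K (m+1), T k m‖ := by
          have := norm_add_le (E - ∑ k ∈ range K, (β/(d:ℂ))^k / (k ! : ℂ))
            ((∑ k ∈ range K, (β/(d:ℂ))^k / (k ! : ℂ)) - ∑ k ∈ range K, T k m)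
          linarith
      _ < 3 * (‖E‖/4) := by
          have e1 : ‖E - ∑ k ∈ range K, (β/(d:ℂ))^k / (k ! : ℂ)‖ < ‖E‖/4 := by
            rw [← norm_neg]; simpa [neg_sub] using hK1
          have e2 : ‖(∑ k ∈ range K, (β/(d:ℂ))^k / (k ! : ℂ)) - ∑ k ∈ range K, T k m‖ < ‖E‖/4 := by
            rw [← norm_neg]; simpa [neg_sub] using hm1
          linarith
  linarith

lemma rad_zero (f : Polynomial ℂ)
    (hf : ∃ N : ℕ, 1 ≤ N ∧ ∀ m : ℕ, N ≤ m →
      (∫ t in Set.Ioi (0:ℝ), Real.exp (-t) • Polynomial.eval (t : ℂ) (f ^ m)) = 0) :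
    f = 0 := by
  obtain ⟨N, hN1, hN⟩ := hf
  have hLL : ∀ m : ℕ, N ≤ m → LL (f ^ m) = 0 := by
    intro m hm
    rw [← integral_L]
    exact hN m hm
  by_contra hf0
  have hc : f.leadingCoeff ≠ 0 := Polynomial.leadingCoeff_ne_zero.2 hf0
  set c := f.leadingCoeff with hcdef
  rcases Nat.eq_zero_or_pos f.natDegree with hdeg | hdeg
  · -- constant case
    have hfC : f = C c := by
      rw [hcdef, Polynomial.leadingCoeff, hdeg]
      exact (Polynomial.eq_C_of_natDegree_eq_zero hdeg)
    have : LL (f ^ N) = c ^ N := by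
      rw [hfC, ← Polynomial.C_pow, ← mul_one (C (c ^ N)), LL_C_mul]
      have h1 : (1 : Polynomial ℂ) = monomial 0 (1:ℂ) := by simp
      rw [h1, LL_monomial]
      simp
    rw [hLL N le_rfl] at this
    exact hc (pow_eq_zero_iff (by omega) |>.1 this.symm)
  · -- nonconstant case
    set f₁ := C c⁻¹ * f with hf₁def
    have hCne : (C c⁻¹ : Polynomial ℂ) ≠ 0 := Polynomial.C_ne_zero.2 (inv_ne_zero hc)
    have hmono : f₁.Monic := by
      rw [Polynomial.Monic, hf₁def, Polynomial.leadingCoeff_mul, Polynomial.leadingCoeff_C]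
      exact inv_mul_cancel₀ hc
    have hdeg₁ : f₁.natDegree = f.natDegree := by
      rw [hf₁def, Polynomial.natDegree_mul hCne hf0, Polynomial.natDegree_C, zero_add]
    have hev := eventually_LL_pow_ne f₁ hmono (by omega)
    obtain ⟨m, hm1, hm2⟩ := (hev.and (eventually_ge_atTop N)).exists
    refine hm1 ?_
    have : f₁ ^ m = C ((c⁻¹) ^ m) * f ^ m := by
      rw [hf₁def, mul_pow, Polynomial.C_pow]
    rw [this, LL_C_mul, hLL m hm2, mul_zero]

/-- The subspace `V = {f ∈ ℂ[t] : ∫₀^∞ e^{-t} f(t) dt = 0}` has radical `r(V) = 0`;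
in particular `V` is a Mathieu–Zhao space of `ℂ[t]`. -/
theorem stmt_6 :
    (∀ f : Polynomial ℂ,
      (∃ N : ℕ, 1 ≤ N ∧ ∀ m : ℕ, N ≤ m →
        (∫ t in Set.Ioi (0:ℝ), Real.exp (-t) • Polynomial.eval (t : ℂ) (f ^ m)) = 0) →
      f = 0) ∧
    IsMZ {f : Polynomial ℂ |
      (∫ t in Set.Ioi (0:ℝ), Real.exp (-t) • Polynomial.eval (t : ℂ) f) = 0} := by
  constructor
  · exact rad_zero
  · intro a ha b
    have ha0 : a = 0 := rad_zero a ha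
    refine ⟨1, le_rfl, fun m hm => ?_⟩
    rw [ha0]
    simp [zero_pow (show m ≠ 0 by omega)]
end

section
/- Let k be a field and R a commutative k-algebra with 1 possessing an orthogonal basis E of idempotents, i.e. every e ∈ E satisfies e² = e, e·e' = 0 for distinct e, e' ∈ E, and every nonzero idempotent of R is a sum of finitely many distinct nonzero elements of E. If M is a Mathieu–Zhao space of R which contains no nonzero element of E, then 0 is the only idempotent of R contained in M. -/
/-- If a commutative `k`-algebra `R` has an orthogonal basis `E` of idempotents and `M` is
a Mathieu–Zhao space of `R` containing no nonzero element of `E`, then `0` is the only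
idempotent of `R` contained in `M`. -/
theorem stmt_8 {k R : Type*} [Field k] [CommRing R] [Algebra k R] (E : Set R)
    (hidem : ∀ e ∈ E, e * e = e)
    (horth : ∀ e ∈ E, ∀ e' ∈ E, e ≠ e' → e * e' = 0)
    (hbasis : ∀ x : R, x * x = x → x ≠ 0 →
      ∃ s : Finset R, (s : Set R) ⊆ E \ {0} ∧ x = ∑ e ∈ s, e)
    (M : Submodule k R) (hM : IsMZ (M : Set R))
    (hEM : ∀ e ∈ E, e ≠ 0 → e ∉ M) :
    ∀ x : R, x * x = x → x ∈ M → x = 0 := by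
  intro x hx hxM
  by_contra hx0
  obtain ⟨s, hsE, hxs⟩ := hbasis x hx hx0
  -- x^m = x for m ≥ 1
  have hpow : ∀ m : ℕ, 1 ≤ m → x ^ m = x := by
    intro m hm
    induction m with
    | zero => omega
    | succ n ih =>
      rcases Nat.eq_or_lt_of_le hm with h | h
      · simp [← h]
      · rw [pow_succ, ih (by omega), hx]
  -- s nonempty
  have hsne : s.Nonempty := by
    rcases s.eq_empty_or_nonempty with h | h
    · exact absurd (by simp [hxs, h]) hx0
    · exact h
  obtain ⟨e, he⟩ := hsne
  have heE : e ∈ E := (hsE he).1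
  have he0 : e ≠ 0 := (hsE he).2
  have hex : e * x = e := by
    rw [hxs, Finset.mul_sum]
    rw [Finset.sum_eq_single e]
    · exact hidem e heE
    · intro e' he' hne
      exact horth e heE e' (hsE he').1 (Ne.symm hne)
    · intro h; exact absurd he h
  obtain ⟨N, hN1, hN⟩ := hM x ⟨1, le_refl 1, fun m hm => by rw [hpow m hm]; exact hxM⟩ e
  have := hN N (le_refl N)
  rw [hpow N hN1, hex] at this
  exact hEM e heE he0 this
end

section
/- Theorem 1: Let k be an algebraically closed field of characteristic zero, V ⊊ k[t] a k-linear subspace, and suppose the largest ideal I contained in V equals k[t]·f where f = ∏_{λ∈Λ}(t−λ)^{m(λ)} has positive degree, Λ being the set of distinct roots of f and m(λ) their multiplicities. Let L : k[t] → k^d be a k-linear map with ker L = V, and for each λ ∈ Λ let g_λ ∈ k[t] satisfy g_λ ≡ 1 mod (t−λ)^{m(λ)} and g_λ ≡ 0 mod (t−μ)^{m(μ)} for every μ ∈ Λ with μ ≠ λ. Then V is a Mathieu–Zhao space of k[t] if and only if for every nonempty subset Λ' ⊆ Λ one has Σ_{λ∈Λ'} L(g_λ) ≠ 0. -/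
open Polynomial

section auxMZ
variable {k : Type*} [Field k]

lemma mz_pairwise_aux (m : k → ℕ) (t : Finset k) :
    (↑t : Set k).Pairwise (Function.onFun IsCoprime fun l => (X - C l) ^ m l) := fun _ _ _ _ hxy =>
  (Polynomial.pairwise_coprime_X_sub_C Function.injective_id hxy).pow

lemma mz_prod_dvd_aux (m : k → ℕ) (t : Finset k) (z : Polynomial k)
    (h : ∀ l ∈ t, (X - C l) ^ m l ∣ z) : (∏ l ∈ t, (X - C l) ^ m l) ∣ z :=
  Finset.prod_dvd_of_coprime (mz_pairwise_aux m t) h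

lemma mz_coprime_prods (m : k → ℕ) (t₁ t₂ : Finset k) (hdis : Disjoint t₁ t₂) :
    IsCoprime (∏ l ∈ t₁, (X - C l) ^ m l) (∏ l ∈ t₂, (X - C l) ^ m l) := by
  apply IsCoprime.prod_left
  intro i hi
  apply IsCoprime.prod_right
  intro j hj
  have hij : i ≠ j := fun h => (Finset.disjoint_left.mp hdis hi) (h ▸ hj)
  exact (Polynomial.pairwise_coprime_X_sub_C Function.injective_id hij).pow

end auxMZ

/-- Theorem 1: criterion for a subspace `V ⊊ k[t]`, with non-zero largest ideal
`I_V = k[t]·f` and `V = ker 𝓛`, to be a Mathieu–Zhao space of `k[t]`. -/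
theorem stmt_9 {k : Type*} [Field k] [IsAlgClosed k] [CharZero k]
    (V : Submodule k (Polynomial k)) (hV : V ≠ ⊤)
    (Λ : Finset k) (hΛ : Λ.Nonempty) (m : k → ℕ) (hm : ∀ l ∈ Λ, 1 ≤ m l)
    (f : Polynomial k) (hf : f = ∏ l ∈ Λ, (X - C l) ^ m l) (hdeg : 0 < f.degree)
    (hI : sSup {I : Ideal (Polynomial k) | (I : Set (Polynomial k)) ⊆ (V : Set (Polynomial k))}
        = Ideal.span {f})
    (d : ℕ) (L : Polynomial k →ₗ[k] (Fin d → k)) (hL : LinearMap.ker L = V)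
    (g : k → Polynomial k)
    (hg1 : ∀ l ∈ Λ, (X - C l) ^ m l ∣ g l - 1)
    (hg2 : ∀ l ∈ Λ, ∀ μ ∈ Λ, μ ≠ l → (X - C μ) ^ m μ ∣ g l) :
    IsMZ (V : Set (Polynomial k)) ↔
      ∀ Λ' ⊆ Λ, Λ'.Nonempty → ∑ l ∈ Λ', L (g l) ≠ 0 := by
  classical
  -- the ideal (f) is contained in V
  have hfmem : ∀ x : Polynomial k, f ∣ x → x ∈ V := by
    intro x hx
    have hx' : x ∈ Ideal.span {f} := Ideal.mem_span_singleton.2 hx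
    rw [← hI] at hx'
    have hdir : DirectedOn (· ≤ ·)
        {I : Ideal (Polynomial k) | (I : Set (Polynomial k)) ⊆ (V : Set (Polynomial k))} := by
      intro I hI' J hJ'
      refine ⟨I ⊔ J, ?_, le_sup_left, le_sup_right⟩
      intro y hy
      obtain ⟨y1, hy1, y2, hy2, rfl⟩ := Submodule.mem_sup.mp hy
      exact V.add_mem (hI' hy1) (hJ' hy2)
    have hne : ({I : Ideal (Polynomial k) |
        (I : Set (Polynomial k)) ⊆ (V : Set (Polynomial k))}).Nonempty := by
      refine ⟨⊥, ?_⟩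
      intro y hy
      simp only [SetLike.mem_coe, Ideal.mem_bot] at hy
      simp [hy]
    obtain ⟨I, hIV, hxI⟩ := (Submodule.mem_sSup_of_directed hne hdir).mp hx'
    exact hIV hxI
  -- divisibility facts about sums of the g's
  have hgsum1 : ∀ Λ' ⊆ Λ, ∀ l ∈ Λ', (X - C l) ^ m l ∣ (∑ μ ∈ Λ', g μ) - 1 := by
    intro Λ' hsub l hl
    rw [← Finset.add_sum_erase _ _ hl]
    have heq : g l + (∑ μ ∈ Λ'.erase l, g μ) - 1
        = (g l - 1) + ∑ μ ∈ Λ'.erase l, g μ := by ring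
    rw [heq]
    exact dvd_add (hg1 l (hsub hl)) (Finset.dvd_sum fun μ hμ =>
      hg2 μ (hsub (Finset.mem_of_mem_erase hμ)) l (hsub hl) (Finset.ne_of_mem_erase hμ).symm)
  have hgsum0 : ∀ Λ' ⊆ Λ, ∀ l ∈ Λ, l ∉ Λ' → (X - C l) ^ m l ∣ ∑ μ ∈ Λ', g μ := by
    intro Λ' hsub l hlΛ hl
    exact Finset.dvd_sum fun μ hμ => hg2 μ (hsub hμ) l hlΛ (by rintro rfl; exact hl hμ)
  constructor
  · -- MZ implies the sums are nonzero
    intro hMZ Λ' hsub hne hzero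
    set e : Polynomial k := ∑ l ∈ Λ', g l with he
    have heV : e ∈ V := by
      rw [← hL, LinearMap.mem_ker, he, map_sum]; exact hzero
    have hidem : f ∣ e ^ 2 - e := by
      rw [hf]
      apply mz_prod_dvd_aux
      intro l hl
      by_cases hl' : l ∈ Λ'
      · have h1 := hgsum1 Λ' hsub l hl'
        have heq : e ^ 2 - e = (e - 1) * e := by ring
        rw [heq]
        exact Dvd.dvd.mul_right h1 e
      · have h1 := hgsum0 Λ' hsub l hl hl'
        have heq : e ^ 2 - e = (e - 1) * e := by ring
        rw [heq]
        exact Dvd.dvd.mul_left h1 (e - 1)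
    have hpow : ∀ j : ℕ, 1 ≤ j → f ∣ e ^ j - e := by
      intro j hj
      induction j with
      | zero => omega
      | succ n ih =>
        rcases Nat.lt_or_ge 1 (n + 1) with h | h
        · have hn : 1 ≤ n := by omega
          have heq : e ^ (n + 1) - e = e * (e ^ n - e) + (e ^ 2 - e) := by ring
          rw [heq]
          exact dvd_add (Dvd.dvd.mul_left (ih hn) e) hidem
        · have h0 : n = 0 := by omega
          subst h0
          simp
    have herad : ∀ j : ℕ, 1 ≤ j → e ^ j ∈ V := by
      intro j hj
      have heq : e ^ j = (e ^ j - e) + e := by ring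
      rw [heq]
      exact V.add_mem (hfmem _ (hpow j hj)) heV
    have hbe : ∀ b : Polynomial k, b * e ∈ V := by
      intro b
      obtain ⟨N, hN1, hbN⟩ := hMZ e ⟨1, le_refl 1, fun j hj => herad j hj⟩ b
      have h1 : b * e ^ N ∈ V := hbN N (le_refl N)
      have h2 : b * e = b * e ^ N - b * (e ^ N - e) := by ring
      rw [h2]
      exact V.sub_mem h1 (hfmem _ (Dvd.dvd.mul_left (hpow N hN1) b))
    have hspan : Ideal.span {e} ≤ Ideal.span {f} := by
      rw [← hI]
      apply le_sSup
      intro x hx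
      obtain ⟨y, rfl⟩ := Ideal.mem_span_singleton'.mp hx
      exact hbe y
    have hfe : f ∣ e := Ideal.span_singleton_le_span_singleton.mp hspan
    obtain ⟨l₀, hl₀⟩ := hne
    have h1 : (X - C l₀) ^ m l₀ ∣ e :=
      dvd_trans (hf ▸ Finset.dvd_prod_of_mem _ (hsub hl₀)) hfe
    have h2 := hgsum1 Λ' hsub l₀ hl₀
    have h3 : (X - C l₀) ^ m l₀ ∣ 1 := by
      have h4 := dvd_sub h1 h2
      rw [← he, sub_sub_cancel] at h4
      exact h4
    have h5 : (X - C l₀) ∣ 1 :=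
      dvd_trans (dvd_pow_self _ (by have := hm l₀ (hsub hl₀); omega)) h3
    exact Polynomial.not_isUnit_X_sub_C l₀ (isUnit_of_dvd_one h5)
  · -- the criterion implies MZ
    rintro H a ⟨N, hN1, haN⟩ b
    set Λ₀ : Finset k := Λ.filter (fun l => a.eval l ≠ 0) with hΛ₀def
    by_cases hΛ₀ : Λ₀.Nonempty
    · -- main case: contradiction, so anything follows
      exfalso
      have hsubΛ : Λ₀ ⊆ Λ := Finset.filter_subset _ _
      set s : ℕ := ∑ l ∈ Λ \ Λ₀, m l with hs
      set q : Polynomial k := ∏ l ∈ Λ₀, (X - C (a.eval l)) ^ m l with hq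
      set c : k := ∏ l ∈ Λ₀, (-(a.eval l)) ^ m l with hc
      have hc0 : c ≠ 0 := by
        rw [hc]
        apply Finset.prod_ne_zero_iff.2
        intro l hl
        have hl' : a.eval l ≠ 0 := (Finset.mem_filter.mp hl).2
        exact pow_ne_zero _ (neg_ne_zero.2 hl')
      have hqeval : q.eval 0 = c := by
        rw [hq, hc, Polynomial.eval_prod]
        apply Finset.prod_congr rfl
        intro l _
        simp [zero_sub]
      have haq : aeval a q = ∏ l ∈ Λ₀, (a - C (a.eval l)) ^ m l := by
        rw [hq, map_prod]
        apply Finset.prod_congr rfl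
        intro l _
        simp [map_pow, map_sub, aeval_X, aeval_C, Polynomial.algebraMap_eq]
      have hf1as : ∀ l ∈ Λ \ Λ₀, (X - C l) ^ m l ∣ a ^ s := by
        intro l hl
        have hls := Finset.mem_sdiff.mp hl
        have h0 : a.eval l = 0 := by
          by_contra h0
          exact hls.2 (Finset.mem_filter.2 ⟨hls.1, h0⟩)
        have h1 : (X - C l) ∣ a := Polynomial.dvd_iff_isRoot.2 h0
        have h2 : m l ≤ s := Finset.single_le_sum (fun i _ => Nat.zero_le (m i)) hl
        exact dvd_trans (pow_dvd_pow_of_dvd h1 (m l)) (pow_dvd_pow a h2)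
      have hfsq : f ∣ a ^ s * aeval a q := by
        rw [hf]
        apply mz_prod_dvd_aux
        intro l hl
        by_cases hl0 : l ∈ Λ₀
        · have h1 : (X - C l) ∣ (a - C (a.eval l)) :=
            Polynomial.dvd_iff_isRoot.2 (by simp [Polynomial.IsRoot])
          have h3 : (a - C (a.eval l)) ^ m l ∣ aeval a q := by
            rw [haq]; exact Finset.dvd_prod_of_mem _ hl0
          exact Dvd.dvd.mul_left (dvd_trans (pow_dvd_pow_of_dvd h1 (m l)) h3) _
        · exact Dvd.dvd.mul_right (hf1as l (Finset.mem_sdiff.2 ⟨hl, hl0⟩)) _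
      obtain ⟨Q₁, hQ₁⟩ : (X : Polynomial k) ∣ (q - C c) := by
        rw [Polynomial.X_dvd_iff, Polynomial.coeff_zero_eq_eval_zero]
        simp [hqeval]
      set u : Polynomial k := aeval a Q₁ with hu
      have key1 : f ∣ C c * a ^ s + a ^ (s + 1) * u := by
        have hq' : q = C c + X * Q₁ := by rw [← hQ₁]; ring
        have hqa : aeval a q = C c + a * u := by
          rw [hq']
          simp [map_add, map_mul, aeval_X, aeval_C, Polynomial.algebraMap_eq, hu]
        have heq : C c * a ^ s + a ^ (s + 1) * u = a ^ s * aeval a q := by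
          rw [hqa]; ring
        rw [heq]; exact hfsq
      have key2 : ∀ j : ℕ, f ∣ (C c) ^ j * a ^ s - a ^ (s + j) * (-u) ^ j := by
        intro j
        induction j with
        | zero => simp
        | succ n ih =>
          have heq : (C c) ^ (n + 1) * a ^ s - a ^ (s + (n + 1)) * (-u) ^ (n + 1)
              = C c * ((C c) ^ n * a ^ s - a ^ (s + n) * (-u) ^ n)
                + (-u) ^ n * a ^ n * (C c * a ^ s + a ^ (s + 1) * u) := by ring
          rw [heq]
          exact dvd_add (Dvd.dvd.mul_left ih _) (Dvd.dvd.mul_left key1 _)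
      have hXq : IsCoprime ((X : Polynomial k) ^ s) q := by
        apply IsCoprime.pow_left
        rw [Polynomial.prime_X.coprime_iff_not_dvd,
          Polynomial.X_dvd_iff, Polynomial.coeff_zero_eq_eval_zero, hqeval]
        exact hc0
      obtain ⟨P₁, P₂, hbez⟩ := hXq
      set e : Polynomial k := ∑ l ∈ Λ₀, g l with he
      set f₀ : Polynomial k := ∏ l ∈ Λ₀, (X - C l) ^ m l with hf₀
      set f₁ : Polynomial k := ∏ l ∈ Λ \ Λ₀, (X - C l) ^ m l with hf₁
      have hff : f = f₁ * f₀ := by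
        rw [hf, hf₀, hf₁, Finset.prod_sdiff hsubΛ]
      have hf₀e : f₀ ∣ e - 1 := mz_prod_dvd_aux _ _ _ (hgsum1 Λ₀ hsubΛ)
      have hf₀q : f₀ ∣ aeval a q := by
        apply mz_prod_dvd_aux
        intro l hl
        have h1 : (X - C l) ∣ (a - C (a.eval l)) :=
          Polynomial.dvd_iff_isRoot.2 (by simp [Polynomial.IsRoot])
        refine dvd_trans (pow_dvd_pow_of_dvd h1 (m l)) ?_
        rw [haq]; exact Finset.dvd_prod_of_mem _ hl
      have hf₁e : f₁ ∣ e := mz_prod_dvd_aux _ _ _ (fun l hl =>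
        hgsum0 Λ₀ hsubΛ l (Finset.mem_sdiff.mp hl).1 (Finset.mem_sdiff.mp hl).2)
      have hf₁as : f₁ ∣ a ^ s := mz_prod_dvd_aux _ _ _ hf1as
      have hcop : IsCoprime f₁ f₀ :=
        mz_coprime_prods m _ _ (Finset.sdiff_disjoint)
      have hbeza : aeval a P₁ * a ^ s + aeval a P₂ * aeval a q = 1 := by
        have h := congrArg (aeval a) hbez
        simpa [map_add, map_mul, map_pow, aeval_X] using h
      have key3 : f ∣ e - a ^ s * aeval a P₁ := by
        rw [hff]
        apply hcop.mul_dvd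
        · exact dvd_sub hf₁e (Dvd.dvd.mul_right hf₁as _)
        · have heq : e - a ^ s * aeval a P₁ = (e - 1) + aeval a P₂ * aeval a q := by
            linear_combination -hbeza
          rw [heq]
          exact dvd_add hf₀e (Dvd.dvd.mul_left hf₀q _)
      have key4 : f ∣ (C c) ^ N * e - a ^ (s + N) * ((-u) ^ N * aeval a P₁) := by
        have heq : (C c) ^ N * e - a ^ (s + N) * ((-u) ^ N * aeval a P₁)
            = (C c) ^ N * (e - a ^ s * aeval a P₁)
              + aeval a P₁ * ((C c) ^ N * a ^ s - a ^ (s + N) * (-u) ^ N) := by ring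
        rw [heq]
        exact dvd_add (Dvd.dvd.mul_left key3 _) (Dvd.dvd.mul_left (key2 N) _)
      obtain ⟨r, hr⟩ := key4
      set W : Polynomial k := (-Q₁) ^ N * P₁ with hW
      have hWa : aeval a W = (-u) ^ N * aeval a P₁ := by
        rw [hW]; simp [map_mul, map_pow, map_neg, hu]
      have hmem : a ^ (s + N) * aeval a W ∈ V := by
        rw [Polynomial.aeval_eq_sum_range (R := k), Finset.mul_sum]
        apply V.sum_mem
        intro i _
        rw [mul_smul_comm, ← pow_add]
        exact V.smul_mem _ (haN (s + N + i) (by omega))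
      have heV : e ∈ V := by
        have h1 : (C c) ^ N * e = a ^ (s + N) * aeval a W + f * r := by
          rw [hWa]; linear_combination hr
        have h2 : (C c) ^ N * e ∈ V := by
          rw [h1]; exact V.add_mem hmem (hfmem _ (dvd_mul_right f r))
        have h3 : (C c) ^ N * e = (c ^ N) • e := by
          rw [Polynomial.smul_eq_C_mul, map_pow]
        have h4 : (c ^ N) • e ∈ V := h3 ▸ h2
        have h5 := V.smul_mem ((c ^ N)⁻¹) h4
        rwa [smul_smul, inv_mul_cancel₀ (pow_ne_zero _ hc0), one_smul] at h5
      refine H Λ₀ hsubΛ hΛ₀ ?_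
      rw [← map_sum]
      have h6 : e ∈ LinearMap.ker L := by rw [hL]; exact heV
      rw [LinearMap.mem_ker] at h6
      exact h6
    · -- all roots of a: eventually b * a^m ∈ (f) ⊆ V
      refine ⟨max (Λ.sup m) 1, le_max_right _ _, fun j hj => ?_⟩
      have hfd : f ∣ a ^ j := by
        rw [hf]
        apply mz_prod_dvd_aux
        intro l hl
        have h0 : a.eval l = 0 := by
          by_contra h0
          exact hΛ₀ ⟨l, Finset.mem_filter.2 ⟨hl, h0⟩⟩
        have h1 : (X - C l) ∣ a := Polynomial.dvd_iff_isRoot.2 h0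
        exact dvd_trans (pow_dvd_pow_of_dvd h1 (m l))
          (pow_dvd_pow a (le_trans (Finset.le_sup hl) (le_trans (le_max_left _ _) hj)))
      exact hfmem _ (Dvd.dvd.mul_left hfd b)
end

section
/- Lemma 2: Let k be an algebraically closed field of characteristic zero, Λ a nonempty finite subset of k, f = ∏_{λ∈Λ}(t−λ)^{m(λ)} with all m(λ) ≥ 1, and let L : k[t] → k be a k-linear map with k[t]·f ⊆ ker L. Then for every λ ∈ Λ there exists a polynomial P_λ ∈ k[T] of degree < m(λ) such that L = S_0 ∘ P_0(∂) + Σ_{λ∈Λ, λ≠0} S_λ ∘ P_λ(D), where S_λ : k[t] → k is evaluation at λ, ∂ = d/dt, D = t·d/dt, and the term S_0 ∘ P_0(∂) is omitted (taken to be 0) if 0 ∉ Λ. -/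
open Polynomial

/-- The operator `D = t·d/dt` on `k[t]`. -/
noncomputable def Dop {k : Type*} [Field k] : Polynomial k → Polynomial k :=
  fun g => X * derivative g

/-- The operator `∂ = d/dt` on `k[t]`. -/
noncomputable def delOp {k : Type*} [Field k] : Polynomial k → Polynomial k :=
  fun g => derivative g

/-- For `P(T) = Σ cᵢ Tⁱ` and an operator `T` on `k[t]`, `opEval P T g = Σ cᵢ Tⁱ(g)`,
i.e. the operator `P(T)` applied to `g`. -/
noncomputable def opEval {k : Type*} [Field k] (P : Polynomial k)
    (T : Polynomial k → Polynomial k) (g : Polynomial k) : Polynomial k :=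
  ∑ i ∈ Finset.range (P.natDegree + 1), P.coeff i • T^[i] g

open scoped Classical

section Aux

variable {k : Type*} [Field k]

/-- `D = t·d/dt` as a linear map. -/
noncomputable def DopL (k : Type*) [Field k] : Polynomial k →ₗ[k] Polynomial k where
  toFun g := X * derivative g
  map_add' a b := by simp [mul_add]
  map_smul' c a := by simp [smul_eq_C_mul]; ring

lemma DopL_coe : ⇑(DopL k) = (Dop : Polynomial k → Polynomial k) := rfl

lemma derivative_coe :
    ⇑(derivative : Polynomial k →ₗ[k] Polynomial k) = (delOp : Polynomial k → Polynomial k) :=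
  rfl

/-- The operator attached to `l` (`∂` when `l = 0`, `D` otherwise), as a linear map. -/
noncomputable def opL (l : k) : Polynomial k →ₗ[k] Polynomial k :=
  if l = 0 then derivative else DopL k

/-- The operator attached to `l` (`∂` when `l = 0`, `D` otherwise). -/
noncomputable def opF (l : k) : Polynomial k → Polynomial k :=
  if l = 0 then delOp else Dop

lemma opL_coe (l : k) : ⇑(opL l) = opF l := by
  by_cases h : l = 0 <;> simp [opL, opF, h, DopL_coe, derivative_coe]

lemma opL_pow_apply (l : k) (i : ℕ) (g : Polynomial k) :
    (opL l ^ i) g = (opF l)^[i] g := by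
  rw [Module.End.pow_apply, opL_coe]

lemma opF_iter_add (l : k) (i : ℕ) (a b : Polynomial k) :
    (opF l)^[i] (a + b) = (opF l)^[i] a + (opF l)^[i] b := by
  rw [← opL_pow_apply, ← opL_pow_apply, ← opL_pow_apply, map_add]

lemma der_dvd {l : k} {s : ℕ} {g : Polynomial k} (h : (X - C l) ^ (s + 1) ∣ g) :
    (X - C l) ^ s ∣ derivative g := by
  obtain ⟨u, rfl⟩ := h
  refine ⟨C ((s + 1 : ℕ) : k) * u + (X - C l) * derivative u, ?_⟩
  simp only [derivative_mul, derivative_pow, derivative_sub, derivative_X, derivative_C,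
    Nat.add_sub_cancel]
  ring

lemma op_dvd (l : k) (s : ℕ) (g : Polynomial k) (h : (X - C l) ^ (s + 1) ∣ g) :
    (X - C l) ^ s ∣ opF l g := by
  by_cases h0 : l = 0
  · simpa [opF, h0, delOp] using der_dvd h
  · simpa [opF, h0, Dop] using (der_dvd h).mul_left X

lemma eval_op_iter_zero (l : k) :
    ∀ (i : ℕ) (g : Polynomial k), (X - C l) ^ (i + 1) ∣ g → eval l ((opF l)^[i] g) = 0
  | 0, g, h => by
    obtain ⟨u, rfl⟩ := h
    simp
  | (i + 1), g, h => by
    rw [Function.iterate_succ_apply]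
    exact eval_op_iter_zero l i (opF l g) (op_dvd l (i + 1) g h)

lemma eval_del_iter (l : k) :
    ∀ (j : ℕ) (u : Polynomial k),
      eval l (delOp^[j] ((X - C l) ^ j * u)) = (j.factorial : k) * eval l u
  | 0, u => by simp
  | (j + 1), u => by
    rw [Function.iterate_succ_apply]
    have h1 : delOp ((X - C l) ^ (j + 1) * u) =
        (X - C l) ^ j * (C ((j + 1 : ℕ) : k) * u + (X - C l) * derivative u) := by
      simp only [delOp, derivative_mul, derivative_pow, derivative_sub, derivative_X,
        derivative_C, Nat.add_sub_cancel]
      ring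
    rw [h1, eval_del_iter l j]
    simp only [Nat.factorial_succ, eval_add, eval_mul, eval_C, eval_sub, eval_X, sub_self,
      zero_mul, add_zero]
    push_cast
    ring

lemma eval_D_iter (l : k) :
    ∀ (j : ℕ) (u : Polynomial k),
      eval l (Dop^[j] ((X - C l) ^ j * u)) = l ^ j * (j.factorial : k) * eval l u
  | 0, u => by simp
  | (j + 1), u => by
    rw [Function.iterate_succ_apply]
    have h1 : Dop ((X - C l) ^ (j + 1) * u) =
        (X - C l) ^ j * (X * (C ((j + 1 : ℕ) : k) * u + (X - C l) * derivative u)) := by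
      simp only [Dop, derivative_mul, derivative_pow, derivative_sub, derivative_X,
        derivative_C, Nat.add_sub_cancel]
      ring
    rw [h1, eval_D_iter l j]
    simp only [Nat.factorial_succ, eval_mul, eval_add, eval_C, eval_sub, eval_X, sub_self,
      zero_mul, add_zero]
    push_cast
    ring

lemma eval_opEval_eq (l : k) (P : Polynomial k) (T : Polynomial k → Polynomial k)
    (g : Polynomial k) {N : ℕ} (hN : P.natDegree < N) :
    eval l (opEval P T g) = ∑ i ∈ Finset.range N, P.coeff i * eval l (T^[i] g) := by
  have h1 : eval l (opEval P T g)
      = ∑ i ∈ Finset.range (P.natDegree + 1), P.coeff i * eval l (T^[i] g) := by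
    rw [opEval, eval_finset_sum]
    exact Finset.sum_congr rfl fun i _ => by rw [eval_smul, smul_eq_mul]
  rw [h1]
  refine Finset.sum_subset (Finset.range_subset_range.2 hN) fun i hi hni => ?_
  rw [Finset.mem_range, not_lt] at hni
  rw [coeff_eq_zero_of_natDegree_lt (by omega), zero_mul]

/-- The key linear map sending a family of coefficient-polynomials (of bounded degree) to
the corresponding functional on polynomials of degree `< n`. -/
noncomputable def Phi (k : Type*) [Field k] (Λ : Finset k) (m : k → ℕ) (n : ℕ) :
    (∀ l : {x // x ∈ Λ}, degreeLT k (m l)) →ₗ[k] Module.Dual k (degreeLT k n) :=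
  ∑ l : {x // x ∈ Λ}, ∑ i ∈ Finset.range n,
    LinearMap.smulRight
      ((lcoeff k i).comp ((Submodule.subtype (degreeLT k (m l))).comp (LinearMap.proj l)))
      (((leval (l : k)).comp (opL (l : k) ^ i)).comp (Submodule.subtype (degreeLT k n)))

lemma Phi_apply (Λ : Finset k) (m : k → ℕ) (n : ℕ)
    (P : ∀ l : {x // x ∈ Λ}, degreeLT k (m l)) (g : Polynomial k) (hg : g ∈ degreeLT k n) :
    Phi k Λ m n P ⟨g, hg⟩ =
      ∑ l ∈ Λ.attach, ∑ i ∈ Finset.range n,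
        (P l : Polynomial k).coeff i * eval (l : k) ((opF (l : k))^[i] g) := by
  rw [Phi]
  simp [LinearMap.sum_apply, Finset.sum_apply, LinearMap.smulRight_apply, LinearMap.comp_apply,
    leval_apply, lcoeff_apply, opL_pow_apply, smul_eq_mul, Finset.univ_eq_attach]

end Aux

/-- Lemma 2: any linear functional on `k[t]` killing the ideal `k[t]·f`, where
`f = ∏_{λ∈Λ}(t-λ)^{m(λ)}`, is of the form `S₀∘P₀(∂) + Σ_{λ∈Λ, λ≠0} S_λ∘P_λ(D)`
with `deg P_λ < m(λ)` (the `λ = 0` term taken with `∂`, and absent when `0 ∉ Λ`). -/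
theorem stmt_10 {k : Type*} [Field k] [IsAlgClosed k] [CharZero k]
    (Λ : Finset k) (hΛ : Λ.Nonempty) (m : k → ℕ) (hm : ∀ l ∈ Λ, 1 ≤ m l)
    (L : Polynomial k →ₗ[k] k)
    (hker : ∀ g : Polynomial k, L (g * ∏ l ∈ Λ, (X - C l) ^ m l) = 0) :
    ∃ P : k → Polynomial k,
      (∀ l ∈ Λ, (P l).degree < (m l : WithBot ℕ)) ∧
      ∀ g : Polynomial k,
        L g = ∑ l ∈ Λ, eval l (opEval (P l) (if l = 0 then delOp else Dop) g) := by
  set n : ℕ := ∑ l ∈ Λ, m l with hn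
  set f : Polynomial k := ∏ l ∈ Λ, (X - C l) ^ m l with hf
  have hfm : f.Monic := monic_prod_of_monic _ _ fun l _ => (monic_X_sub_C l).pow _
  have hfd : f.natDegree = n := by
    rw [hf, natDegree_prod_of_monic _ _ fun l _ => (monic_X_sub_C l).pow _]
    exact Finset.sum_congr rfl fun l _ => by
      rw [natDegree_pow, natDegree_X_sub_C, mul_one]
  haveI : ∀ N : ℕ, Module.Finite k (degreeLT k N) :=
    fun N => Module.Finite.equiv (degreeLTEquiv k N).symm
  have hfr_dlt : ∀ N : ℕ, Module.finrank k (degreeLT k N) = N := fun N => by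
    rw [(degreeLTEquiv k N).finrank_eq, Module.finrank_fin_fun]
  have hmn : ∀ l ∈ Λ, m l ≤ n := fun l hl =>
    Finset.single_le_sum (fun i _ => Nat.zero_le _) hl
  -- injectivity of Phi
  have hinj : Function.Injective (Phi k Λ m n) := by
    rw [← LinearMap.ker_eq_bot, Submodule.eq_bot_iff]
    intro P hP
    funext l
    rw [Pi.zero_apply]
    apply Subtype.ext
    rw [Submodule.coe_zero]
    by_contra hne
    set j : ℕ := (P l : Polynomial k).natDegree with hj
    set u : Polynomial k := ∏ μ ∈ Λ.erase (l : k), (X - C μ) ^ m μ with hu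
    set g : Polynomial k := (X - C (l : k)) ^ j * u with hgdef
    have hjm : j < m (l : k) :=
      (natDegree_lt_iff_degree_lt hne).2 (mem_degreeLT.1 (P l).2)
    have hum : u.Monic := monic_prod_of_monic _ _ fun μ _ => (monic_X_sub_C μ).pow _
    have hgm : g.Monic := ((monic_X_sub_C _).pow _).mul hum
    have hud : u.natDegree = ∑ μ ∈ Λ.erase (l : k), m μ := by
      rw [hu, natDegree_prod_of_monic _ _ fun μ _ => (monic_X_sub_C μ).pow _]
      exact Finset.sum_congr rfl fun μ _ => by
        rw [natDegree_pow, natDegree_X_sub_C, mul_one]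
    have hsum : m (l : k) + ∑ μ ∈ Λ.erase (l : k), m μ = n :=
      Finset.add_sum_erase Λ m l.2
    have hgd : g.natDegree < n := by
      rw [hgdef, natDegree_mul (pow_ne_zero _ (X_sub_C_ne_zero _)) hum.ne_zero,
        natDegree_pow, natDegree_X_sub_C, mul_one, hud]
      omega
    have hg : g ∈ degreeLT k n :=
      mem_degreeLT.2 ((natDegree_lt_iff_degree_lt hgm.ne_zero).1 hgd)
    have h0 : Phi k Λ m n P ⟨g, hg⟩ = 0 := by rw [hP]; rfl
    rw [Phi_apply] at h0
    rw [Finset.sum_eq_single l (fun b _ hbl => ?_) (fun h => absurd (Finset.mem_attach _ _) h)]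
      at h0
    · -- the `l` term
      have hjn : j ∈ Finset.range n := Finset.mem_range.2 (lt_of_lt_of_le hjm (hmn _ l.2))
      rw [Finset.sum_eq_single_of_mem j hjn (fun i _ hij => ?_)] at h0
      · -- i = j term is nonzero
        have hcj : (P l : Polynomial k).coeff j ≠ 0 := by
          rw [hj, ← leadingCoeff]
          exact leadingCoeff_ne_zero.2 hne
        have huval : eval (l : k) u ≠ 0 := by
          rw [hu, eval_prod]
          refine Finset.prod_ne_zero_iff.2 fun μ hμ => ?_
          have : (l : k) ≠ μ := (Finset.mem_erase.1 hμ).1.symm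
          simp only [eval_pow, eval_sub, eval_X, eval_C]
          exact pow_ne_zero _ (sub_ne_zero.2 this)
        by_cases hl0 : (l : k) = 0
        · rw [hgdef, show opF (l : k) = delOp by simp [opF, hl0], eval_del_iter] at h0
          exact hcj (by
            have := mul_ne_zero (Nat.cast_ne_zero.2 j.factorial_ne_zero : (j.factorial : k) ≠ 0)
              huval
            exact (mul_eq_zero.1 h0).resolve_right this)
        · rw [hgdef, show opF (l : k) = Dop by simp [opF, hl0], eval_D_iter] at h0
          refine hcj ((mul_eq_zero.1 h0).resolve_right ?_)
          exact mul_ne_zero (mul_ne_zero (pow_ne_zero _ hl0)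
            (Nat.cast_ne_zero.2 j.factorial_ne_zero)) huval
      · -- i ≠ j terms vanish
        rcases lt_or_gt_of_ne hij with h | h
        · rw [eval_op_iter_zero (l : k) i g
            ((pow_dvd_pow _ (by omega : i + 1 ≤ j)).trans (dvd_mul_right _ _)), mul_zero]
        · rw [coeff_eq_zero_of_natDegree_lt (by omega), zero_mul]
    · -- terms for b ≠ l vanish
      refine Finset.sum_eq_zero fun i _ => ?_
      by_cases hc : (P b : Polynomial k).coeff i = 0
      · rw [hc, zero_mul]
      have hPb : (P b : Polynomial k) ≠ 0 := fun h => hc (by simp [h])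
      have him : i < m (b : k) :=
        lt_of_le_of_lt (le_natDegree_of_ne_zero hc)
          ((natDegree_lt_iff_degree_lt hPb).2 (mem_degreeLT.1 (P b).2))
      have hbm : ((X - C (b : k)) ^ m (b : k)) ∣ g := by
        refine Dvd.dvd.trans ?_ (dvd_mul_left u _)
        exact Finset.dvd_prod_of_mem _
          (Finset.mem_erase.2 ⟨Subtype.coe_injective.ne hbl, b.2⟩)
      rw [eval_op_iter_zero (b : k) i g ((pow_dvd_pow _ (by omega)).trans hbm), mul_zero]
  -- surjectivity of Phi by dimension count
  have hfrk : Module.finrank k (∀ l : {x // x ∈ Λ}, degreeLT k (m l)) =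
      Module.finrank k (Module.Dual k (degreeLT k n)) := by
    rw [Module.finrank_pi_fintype, Subspace.dual_finrank_eq, hfr_dlt]
    calc (∑ l : {x // x ∈ Λ}, Module.finrank k (degreeLT k (m l)))
        = ∑ l : {x // x ∈ Λ}, m (l : k) := by
          exact Finset.sum_congr rfl fun l _ => hfr_dlt _
      _ = ∑ l ∈ Λ, m l := Finset.sum_coe_sort Λ m
  obtain ⟨P', hP'⟩ :=
    ((LinearMap.injective_iff_surjective_of_finrank_eq_finrank hfrk).1 hinj)
      (L.comp (Submodule.subtype (degreeLT k n)))
  -- the answer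
  refine ⟨fun l => if h : l ∈ Λ then (P' ⟨l, h⟩ : Polynomial k) else 0, fun l hl => ?_, ?_⟩
  · simp only [dif_pos hl]
    exact mem_degreeLT.1 (P' ⟨l, hl⟩).2
  intro g
  set P : k → Polynomial k := fun l => if h : l ∈ Λ then (P' ⟨l, h⟩ : Polynomial k) else 0
    with hPdef
  have hdegP : ∀ l ∈ Λ, (P l).natDegree < m l := by
    intro l hl
    by_cases h0 : P l = 0
    · rw [h0, natDegree_zero]
      exact hm l hl
    · refine (natDegree_lt_iff_degree_lt h0).2 ?_
      simp only [hPdef, dif_pos hl] at h0 ⊢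
      exact mem_degreeLT.1 (P' ⟨l, hl⟩).2
  have key : g %ₘ f + f * (g /ₘ f) = g := modByMonic_add_div g f
  set r : Polynomial k := g %ₘ f with hr
  set q : Polynomial k := g /ₘ f with hq
  have hLg : L g = L r := by
    conv_lhs => rw [← key]
    rw [map_add]
    have : L (f * q) = 0 := by rw [mul_comm]; exact hker q
    rw [this, add_zero]
  have hrmem : r ∈ degreeLT k n := by
    refine mem_degreeLT.2 (lt_of_lt_of_le (degree_modByMonic_lt g hfm) ?_)
    rw [degree_eq_natDegree hfm.ne_zero, hfd]
  have hOps : ∀ l : k, (if l = 0 then delOp else Dop) = opF l := fun l => rfl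
  have step1 : ∀ l ∈ Λ, eval l (opEval (P l) (opF l) g) =
      ∑ i ∈ Finset.range n, (P l).coeff i * eval l ((opF l)^[i] r) := by
    intro l hl
    rw [eval_opEval_eq l (P l) (opF l) g (lt_of_lt_of_le (hdegP l hl) (hmn l hl))]
    refine Finset.sum_congr rfl fun i _ => ?_
    by_cases hc : (P l).coeff i = 0
    · rw [hc, zero_mul, zero_mul]
    have hPl : P l ≠ 0 := fun h => hc (by simp [h])
    have him : i < m l := lt_of_le_of_lt (le_natDegree_of_ne_zero hc) (hdegP l hl)
    have hdvd : (X - C l) ^ (i + 1) ∣ f * q :=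
      ((pow_dvd_pow (X - C l) him).trans (Finset.dvd_prod_of_mem (fun μ => (X - C μ) ^ m μ) hl)).trans
        (dvd_mul_right f q)
    conv_lhs => rw [← key]
    rw [opF_iter_add, eval_add, eval_op_iter_zero l i _ hdvd, add_zero]
  calc L g = L r := hLg
    _ = (L.comp (Submodule.subtype (degreeLT k n))) ⟨r, hrmem⟩ := rfl
    _ = Phi k Λ m n P' ⟨r, hrmem⟩ := by rw [hP']
    _ = ∑ l ∈ Λ.attach, ∑ i ∈ Finset.range n,
          (P' l : Polynomial k).coeff i * eval (l : k) ((opF (l : k))^[i] r) :=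
        Phi_apply Λ m n P' r hrmem
    _ = ∑ l ∈ Λ.attach, ∑ i ∈ Finset.range n,
          (P (l : k)).coeff i * eval (l : k) ((opF (l : k))^[i] r) := by
        refine Finset.sum_congr rfl fun l _ => Finset.sum_congr rfl fun i _ => ?_
        simp only [hPdef, dif_pos l.2, Subtype.coe_eta]
    _ = ∑ l ∈ Λ, ∑ i ∈ Finset.range n, (P l).coeff i * eval l ((opF l)^[i] r) :=
        Finset.sum_attach Λ (fun l => ∑ i ∈ Finset.range n, (P l).coeff i * eval l ((opF l)^[i] r))
    _ = ∑ l ∈ Λ, eval l (opEval (P l) (opF l) g) :=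
        (Finset.sum_congr rfl fun l hl => (step1 l hl).symm)
    _ = ∑ l ∈ Λ, eval l (opEval (P l) (if l = 0 then delOp else Dop) g) := by
        refine Finset.sum_congr rfl fun l _ => ?_
        rw [hOps l]
end

section
/- Lemma 4: Let k be an algebraically closed field of characteristic zero, Λ a nonempty finite subset of k, f = ∏_{λ∈Λ}(t−λ)^{m(λ)} with all m(λ) ≥ 1, and let 𝓛 = (L_1,…,L_d) : k[t] → k^d where each L_i = S_0 ∘ P_0^{(i)}(∂) + Σ_{λ∈Λ, λ≠0} S_λ ∘ P_λ^{(i)}(D) with P_λ^{(i)} ∈ k[T] of degree < m(λ) (the P_0 term omitted if 0 ∉ Λ). If for every λ ∈ Λ the maximum over i of the degrees of P_λ^{(i)} equals m(λ)−1, then k[t]·f is the largest ideal of k[t] contained in ker 𝓛. -/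
open Polynomial

open scoped Classical

section AuxLemmas
variable {k : Type*} [Field k]


lemma deriv_step (a : k) (s : ℕ) (g : Polynomial k)
    (h : (X - C a)^(s+1) ∣ g) : (X - C a)^s ∣ derivative g := by
  obtain ⟨w, rfl⟩ := h
  refine ⟨C ((s:k)+1) * w + (X - C a) * derivative w, ?_⟩
  rw [derivative_mul, derivative_pow]
  simp only [Nat.add_sub_cancel, derivative_sub, derivative_X, derivative_C, sub_zero, mul_one]
  push_cast
  ring

lemma iter_dvd (a : k) (T : Polynomial k → Polynomial k)
    (hT : ∀ s g, (X - C a)^(s+1) ∣ g → (X - C a)^s ∣ T g) :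
    ∀ (j s : ℕ) (g : Polynomial k), (X - C a)^(s+j) ∣ g → (X - C a)^s ∣ T^[j] g := by
  intro j
  induction j with
  | zero => intro s g h; simpa using h
  | succ n ih =>
    intro s g h
    rw [Function.iterate_succ_apply]
    exact ih s (T g) (hT (s+n) g (by rwa [show s + (n+1) = (s+n)+1 from by omega] at h))

lemma hT_del (a : k) : ∀ s (g : Polynomial k), (X - C a)^(s+1) ∣ g → (X - C a)^s ∣ delOp g :=
  fun s g h => deriv_step a s g h

lemma hT_D (a : k) : ∀ s (g : Polynomial k), (X - C a)^(s+1) ∣ g → (X - C a)^s ∣ Dop g :=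
  fun s g h => (deriv_step a s g h).mul_left X

lemma eval_opEval_zero (a : k) (mm : ℕ) (Pp g : Polynomial k)
    (T : Polynomial k → Polynomial k)
    (hT : ∀ s g, (X - C a)^(s+1) ∣ g → (X - C a)^s ∣ T g)
    (hdeg : Pp.degree < (mm : WithBot ℕ)) (hdvd : (X - C a)^mm ∣ g) :
    eval a (opEval Pp T g) = 0 := by
  unfold opEval
  rw [eval_finset_sum]
  apply Finset.sum_eq_zero
  intro i _
  rcases eq_or_ne (Pp.coeff i) 0 with h0 | h0
  · simp [h0]
  · have hi' : i < mm := by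
      have h1 := lt_of_le_of_lt (le_degree_of_ne_zero h0) hdeg
      exact_mod_cast h1
    have hdv : (X - C a)^1 ∣ T^[i] g :=
      iter_dvd a T hT i 1 g (dvd_trans (pow_dvd_pow _ (by omega)) hdvd)
    rw [pow_one] at hdv
    have : eval a (T^[i] g) = 0 := dvd_iff_isRoot.mp hdv
    simp [this]

lemma evalD (a : k) : ∀ (r : ℕ) (u : Polynomial k),
    eval a (Dop^[r] ((X - C a)^r * u)) = r.factorial * a^r * eval a u := by
  intro r
  induction r with
  | zero => intro u; simp
  | succ n ih =>
    intro u
    have key : Dop ((X - C a)^(n+1) * u)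
        = (X - C a)^n * (C ((n:k)+1) * X * u + (X - C a) * (X * derivative u)) := by
      show X * derivative ((X - C a)^(n+1) * u) = _
      rw [derivative_mul, derivative_pow]
      simp only [Nat.add_sub_cancel, derivative_sub, derivative_X, derivative_C, sub_zero, mul_one]
      push_cast
      ring
    rw [Function.iterate_succ_apply, key, ih]
    simp only [eval_add, eval_mul, eval_sub, eval_X, eval_C, sub_self, zero_mul, add_zero,
      Nat.factorial_succ]
    push_cast
    ring

lemma evalDel : ∀ (r : ℕ) (u : Polynomial k),
    eval 0 (delOp^[r] (X^r * u)) = r.factorial * eval 0 u := by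
  intro r
  induction r with
  | zero => intro u; simp
  | succ n ih =>
    intro u
    have key : delOp (X^(n+1) * u) = X^n * (C ((n:k)+1) * u + X * derivative u) := by
      show derivative (X^(n+1) * u) = _
      rw [derivative_mul, derivative_X_pow]
      push_cast
      ring
    rw [Function.iterate_succ_apply, key, ih]
    simp only [eval_add, eval_mul, eval_X, eval_C, zero_mul, add_zero, Nat.factorial_succ]
    push_cast
    ring
end AuxLemmas

/-- Lemma 4: if `𝓛 = (L₁,…,L_d)` with
`L_i = S₀∘P₀⁽ⁱ⁾(∂) + Σ_{λ∈Λ, λ≠0} S_λ∘P_λ⁽ⁱ⁾(D)`, `deg P_λ⁽ⁱ⁾ < m(λ)`, and for every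
`λ ∈ Λ` the maximum over `i` of the degrees of the `P_λ⁽ⁱ⁾` equals `m(λ) - 1`, then
`k[t]·f`, with `f = ∏_{λ∈Λ}(t-λ)^{m(λ)}`, is the largest ideal contained in `ker 𝓛`. -/
theorem stmt_12 {k : Type*} [Field k] [IsAlgClosed k] [CharZero k]
    (Λ : Finset k) (hΛ : Λ.Nonempty) (m : k → ℕ) (hm : ∀ l ∈ Λ, 1 ≤ m l)
    (f : Polynomial k) (hf : f = ∏ l ∈ Λ, (X - C l) ^ m l)
    (d : ℕ) (P : Fin d → k → Polynomial k)
    (hdeg : ∀ i : Fin d, ∀ l ∈ Λ, (P i l).degree < (m l : WithBot ℕ))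
    (hmax : ∀ l ∈ Λ, ∃ i : Fin d, (P i l).degree = ((m l - 1 : ℕ) : WithBot ℕ)) :
    (↑(Ideal.span {f}) ⊆ {g : Polynomial k | ∀ i : Fin d,
        ∑ l ∈ Λ, eval l (opEval (P i l) (if l = 0 then delOp else Dop) g) = 0}) ∧
    ∀ J : Ideal (Polynomial k),
      (↑J : Set (Polynomial k)) ⊆ {g : Polynomial k | ∀ i : Fin d,
          ∑ l ∈ Λ, eval l (opEval (P i l) (if l = 0 then delOp else Dop) g) = 0} →
      J ≤ Ideal.span {f} := by
  have vanish : ∀ (l : k), l ∈ Λ → ∀ (i : Fin d) (g : Polynomial k),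
      (X - C l)^(m l) ∣ g →
      eval l (opEval (P i l) (if l = 0 then delOp else Dop) g) = 0 := by
    intro l hl i g hdvd
    by_cases h0 : l = 0
    · subst h0
      rw [if_pos rfl]
      exact eval_opEval_zero 0 (m 0) _ g delOp (hT_del 0) (hdeg i 0 hl) hdvd
    · rw [if_neg h0]
      exact eval_opEval_zero l (m l) _ g Dop (hT_D l) (hdeg i l hl) hdvd
  constructor
  · intro g hg i
    have hfg : f ∣ g := by
      rwa [← Ideal.mem_span_singleton]
    apply Finset.sum_eq_zero
    intro l hl
    exact vanish l hl i g
      (dvd_trans (by rw [hf]; exact Finset.dvd_prod_of_mem _ hl) hfg)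
  · intro J hJ g hg
    rw [Ideal.mem_span_singleton]
    by_contra hndvd
    have hg0 : g ≠ 0 := fun h => hndvd (h ▸ dvd_zero f)
    have hex : ∃ l ∈ Λ, ¬ (X - C l)^(m l) ∣ g := by
      by_contra hall
      push_neg at hall
      apply hndvd
      rw [hf]
      refine Finset.prod_dvd_of_coprime ?_ hall
      intro a ha b hb hab
      exact (isCoprime_X_sub_C_of_isUnit_sub (IsUnit.of_mul_eq_one (a := a-b) (a-b)⁻¹
        (mul_inv_cancel₀ (sub_ne_zero.mpr hab)))).pow
    obtain ⟨l0, hl0, hl0nd⟩ := hex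
    set r := rootMultiplicity l0 g with hr
    have hrlt : r < m l0 := by
      by_contra hge
      push_neg at hge
      exact hl0nd (dvd_trans (pow_dvd_pow _ hge) (pow_rootMultiplicity_dvd g l0))
    set u := g /ₘ (X - C l0)^r with hu
    have hgu : (X - C l0)^r * u = g := pow_mul_divByMonic_rootMultiplicity_eq g l0
    have hu0 : eval l0 u ≠ 0 := eval_divByMonic_pow_rootMultiplicity_ne_zero l0 hg0
    obtain ⟨i, hPdeg⟩ := hmax l0 hl0
    set w : Polynomial k :=
      (X - C l0)^(m l0 - 1 - r) * ∏ l ∈ Λ.erase l0, (X - C l)^(m l) with hw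
    have hwJ : g * w ∈ J := J.mul_mem_right w hg
    have hker := hJ hwJ i
    set U : Polynomial k := u * ∏ l ∈ Λ.erase l0, (X - C l)^(m l) with hU
    have hgw : g * w = (X - C l0)^(m l0 - 1) * U := by
      have hsplit : (X - C l0)^(m l0 - 1) = (X - C l0)^r * (X - C l0)^(m l0 - 1 - r) := by
        rw [← pow_add]; congr 1; omega
      rw [← hgu, hw, hU, hsplit]; ring
    have hU0 : eval l0 U ≠ 0 := by
      rw [hU, eval_mul]
      refine mul_ne_zero hu0 ?_
      rw [eval_prod]
      refine Finset.prod_ne_zero_iff.mpr ?_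
      intro l hl
      rw [eval_pow]
      refine pow_ne_zero _ ?_
      simp only [eval_sub, eval_X, eval_C]
      exact sub_ne_zero.mpr (Ne.symm (Finset.mem_erase.mp hl).1)
    -- the sum reduces to the l0 term
    rw [Finset.sum_eq_single_of_mem l0 hl0 (fun b hb hbne => by
      refine vanish b hb i (g*w) ?_
      refine dvd_trans (dvd_trans (Finset.dvd_prod_of_mem (fun l => (X - C l)^(m l))
        (Finset.mem_erase.mpr ⟨hbne, hb⟩)) ?_) (dvd_mul_left w g)
      exact ⟨(X - C l0)^(m l0 - 1 - r), by rw [hw]; ring⟩)] at hker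
    -- now analyze the l0 term
    have hPne : P i l0 ≠ 0 := fun h => by simp [h] at hPdeg
    have hnatdeg : (P i l0).natDegree = m l0 - 1 := natDegree_eq_of_degree_eq_some hPdeg
    have hlead : (P i l0).coeff (m l0 - 1) ≠ 0 := by
      rw [← hnatdeg]; exact (P i l0).coeff_ne_zero_of_eq_degree (hnatdeg ▸ degree_eq_natDegree hPne)
    set T : Polynomial k → Polynomial k := if l0 = 0 then delOp else Dop with hTdef
    have hTstep : ∀ s (g : Polynomial k), (X - C l0)^(s+1) ∣ g → (X - C l0)^s ∣ T g := by
      by_cases h0 : l0 = 0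
      · rw [hTdef, if_pos h0]; exact hT_del l0
      · rw [hTdef, if_neg h0]; exact hT_D l0
    have hEval : eval l0 (T^[m l0 - 1] (g*w)) ≠ 0 := by
      by_cases h0 : l0 = 0
      · rw [hTdef, if_pos h0, hgw, h0]
        rw [h0] at hU0
        simp only [map_zero, sub_zero]
        rw [evalDel]
        exact mul_ne_zero (Nat.cast_ne_zero.mpr (Nat.factorial_ne_zero _)) hU0
      · rw [hTdef, if_neg h0, hgw, evalD]
        exact mul_ne_zero (mul_ne_zero (Nat.cast_ne_zero.mpr (Nat.factorial_ne_zero _))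
          (pow_ne_zero _ h0)) hU0
    rw [show opEval (P i l0) T (g*w)
        = ∑ j ∈ Finset.range ((P i l0).natDegree + 1), (P i l0).coeff j • T^[j] (g*w)
        from rfl, eval_finset_sum,
      Finset.sum_eq_single_of_mem (m l0 - 1)
        (Finset.mem_range.mpr (by omega))
        (fun j hj hjne => by
          have hjlt : j < m l0 - 1 := by
            rw [Finset.mem_range, hnatdeg] at hj; omega
          have hdv : (X - C l0)^1 ∣ T^[j] (g*w) := by
            refine iter_dvd l0 T hTstep j 1 (g*w) ?_
            rw [hgw]
            exact Dvd.dvd.mul_right (pow_dvd_pow _ (by omega)) U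
          rw [pow_one] at hdv
          have : eval l0 (T^[j] (g*w)) = 0 := dvd_iff_isRoot.mp hdv
          simp [this])] at hker
    rw [eval_smul, smul_eq_mul] at hker
    exact (mul_ne_zero hlead hEval) hker
end

section
/- Lemma 5: Let k be an algebraically closed field of characteristic zero, Λ a nonempty finite subset of k with multiplicities m(λ) ≥ 1, and L : k[t] → k of the form L = S_0 ∘ P_0(∂) + Σ_{μ∈Λ, μ≠0} S_μ ∘ P_μ(D) with each P_μ ∈ k[T] of degree < m(μ) (the P_0 term omitted if 0 ∉ Λ). For λ ∈ Λ let g_λ ∈ k[t] satisfy g_λ ≡ 1 mod (t−λ)^{m(λ)} and g_λ ≡ 0 mod (t−μ)^{m(μ)} for every μ ∈ Λ with μ ≠ λ. Then L(g_λ) = P_λ(0). -/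
open Polynomial

open scoped Classical

section Aux
variable {k : Type*} [Field k]

lemma deriv_dvd (μ : k) (n : ℕ) (f : Polynomial k) (h : (X - C μ)^(n+1) ∣ f) :
    (X - C μ)^n ∣ derivative f := by
  obtain ⟨h, rfl⟩ := h
  rw [derivative_mul, derivative_pow, derivative_sub, derivative_X, derivative_C, sub_zero,
    mul_one, Nat.add_sub_cancel]
  exact dvd_add (Dvd.dvd.mul_right (dvd_mul_left _ _) _)
    (dvd_mul_of_dvd_left (pow_dvd_pow _ n.le_succ) _)

lemma op_dvd_s13 (op : Polynomial k → Polynomial k)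
    (hop : op = delOp ∨ op = Dop) (μ : k) (n : ℕ) (f : Polynomial k)
    (h : (X - C μ)^(n+1) ∣ f) : (X - C μ)^n ∣ op f := by
  rcases hop with rfl | rfl
  · exact deriv_dvd μ n f h
  · exact dvd_mul_of_dvd_right (deriv_dvd μ n f h) _

lemma op_iter_dvd (op : Polynomial k → Polynomial k)
    (hop : op = delOp ∨ op = Dop) (μ : k) (i n : ℕ) (hi : i ≤ n) (f : Polynomial k)
    (h : (X - C μ)^n ∣ f) : (X - C μ)^(n - i) ∣ op^[i] f := by
  induction i generalizing n f with
  | zero => simpa using h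
  | succ i ih =>
    rw [Function.iterate_succ', Function.comp_apply]
    have : n - (i+1) + 1 ≤ n - i := by omega
    exact (pow_dvd_pow _ (le_refl _)).trans <|
      op_dvd_s13 op hop μ _ _ ((pow_dvd_pow _ this).trans (ih n (by omega) f h))

lemma eval_op_iter_zero_s13 (op : Polynomial k → Polynomial k)
    (hop : op = delOp ∨ op = Dop) (μ : k) (i n : ℕ) (hi : i < n) (f : Polynomial k)
    (h : (X - C μ)^n ∣ f) : eval μ (op^[i] f) = 0 := by
  have := op_iter_dvd op hop μ i n (le_of_lt hi) f h
  have h1 : (X - C μ) ∣ op^[i] f := (dvd_pow_self _ (by omega : n - i ≠ 0)).trans this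
  obtain ⟨q, hq⟩ := h1
  simp [hq]

lemma op_add (op : Polynomial k → Polynomial k)
    (hop : op = delOp ∨ op = Dop) (f g : Polynomial k) :
    op (f + g) = op f + op g := by
  rcases hop with rfl | rfl <;> simp [delOp, Dop, mul_add]

lemma op_iter_add (op : Polynomial k → Polynomial k)
    (hop : op = delOp ∨ op = Dop) (i : ℕ) (f g : Polynomial k) :
    op^[i] (f + g) = op^[i] f + op^[i] g := by
  induction i generalizing f g with
  | zero => simp
  | succ i ih =>
    simp only [Function.iterate_succ, Function.comp_apply]
    rw [op_add op hop, ih]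

lemma op_iter_one (op : Polynomial k → Polynomial k)
    (hop : op = delOp ∨ op = Dop) (i : ℕ) (hi : 1 ≤ i) :
    op^[i] (1 : Polynomial k) = 0 := by
  have h0 : op 0 = 0 := by rcases hop with rfl | rfl <;> simp [delOp, Dop]
  have h1 : op 1 = 0 := by rcases hop with rfl | rfl <;> simp [delOp, Dop]
  induction i with
  | zero => omega
  | succ i ih =>
    rcases Nat.eq_or_lt_of_le hi with h | h
    · simp [← h, h1]
    · rw [Function.iterate_succ', Function.comp_apply, ih (by omega), h0]

end Aux

/-- Lemma 5: for `L = S₀∘P₀(∂) + Σ_{μ∈Λ, μ≠0} S_μ∘P_μ(D)` with `deg P_μ < m(μ)`, and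
`g_λ ≡ 1 mod (t-λ)^{m(λ)}`, `g_λ ≡ 0 mod (t-μ)^{m(μ)}` for `μ ∈ Λ`, `μ ≠ λ`, one has
`L(g_λ) = P_λ(0)`. -/
theorem stmt_13 {k : Type*} [Field k] [IsAlgClosed k] [CharZero k]
    (Λ : Finset k) (hΛ : Λ.Nonempty) (m : k → ℕ) (hm : ∀ μ ∈ Λ, 1 ≤ m μ)
    (P : k → Polynomial k) (hdeg : ∀ μ ∈ Λ, (P μ).degree < (m μ : WithBot ℕ))
    (l : k) (hl : l ∈ Λ) (g : Polynomial k)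
    (hg1 : (X - C l) ^ m l ∣ g - 1)
    (hg2 : ∀ μ ∈ Λ, μ ≠ l → (X - C μ) ^ m μ ∣ g) :
    ∑ μ ∈ Λ, eval μ (opEval (P μ) (if μ = 0 then delOp else Dop) g) = (P l).eval 0 := by
  have hop : ∀ μ : k, (if μ = 0 then (delOp : Polynomial k → Polynomial k) else Dop) = delOp ∨
      (if μ = 0 then (delOp : Polynomial k → Polynomial k) else Dop) = Dop := fun μ => by
    split <;> simp
  rw [Finset.sum_eq_single_of_mem l hl]
  · -- main term at l
    set op := (if l = 0 then (delOp : Polynomial k → Polynomial k) else Dop) with hopdef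
    unfold opEval
    rw [eval_finset_sum]
    have key : ∀ i ∈ Finset.range ((P l).natDegree + 1),
        eval l ((P l).coeff i • op^[i] g) = if i = 0 then (P l).coeff 0 else 0 := by
      intro i hi
      by_cases hc : (P l).coeff i = 0
      · rcases Nat.eq_zero_or_pos i with rfl | hi1 <;>
          simp [hc, Nat.pos_iff_ne_zero.mp, *]
      · have hPl : P l ≠ 0 := fun h => hc (by simp [h])
        have him : i < m l :=
          lt_of_le_of_lt (Finset.mem_range_succ_iff.mp hi)
            ((Polynomial.natDegree_lt_iff_degree_lt hPl).mpr (hdeg l hl))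
        have hgsplit : g = 1 + (g - 1) := by ring
        rw [hgsplit, op_iter_add op (hop l), smul_eq_C_mul, eval_mul, eval_C, eval_add,
          eval_op_iter_zero_s13 op (hop l) l i (m l) him _ hg1, add_zero]
        rcases Nat.eq_zero_or_pos i with rfl | hi1
        · simp
        · rw [op_iter_one op (hop l) i hi1]
          simp [Nat.pos_iff_ne_zero.mp hi1]
    rw [Finset.sum_congr rfl key, Finset.sum_ite_eq' (Finset.range ((P l).natDegree + 1)) 0]
    simp [Polynomial.coeff_zero_eq_eval_zero]
  · -- other μ vanish
    intro b hb hbl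
    unfold opEval
    rw [eval_finset_sum]
    refine Finset.sum_eq_zero fun i hi => ?_
    by_cases hc : (P b).coeff i = 0
    · simp [hc]
    · have hPb : P b ≠ 0 := fun h => hc (by simp [h])
      have him : i < m b :=
        lt_of_le_of_lt (Finset.mem_range_succ_iff.mp hi)
          ((Polynomial.natDegree_lt_iff_degree_lt hPb).mpr (hdeg b hb))
      rw [smul_eq_C_mul, eval_mul, eval_C,
        eval_op_iter_zero_s13 _ (hop b) b i (m b) him _ (hg2 b hb hbl), mul_zero]
end

section
/- Image Conjecture in positive characteristic: Let k be a field of characteristic p > 0, A a commutative k-algebra, and a_1,…,a_n ∈ A a regular sequence in A. Let ImD = Σ_{i=1}^n (∂_{x_i} − a_i)·A[x_1,…,x_n]. Then ImD is a Mathieu–Zhao space of A[x_1,…,x_n]. -/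
set_option linter.unusedSectionVars false

namespace ICPP

variable {A : Type*} [CommRing A]

/-- `x` is a non-zerodivisor modulo the ideal `P`. -/
def NZD (P : Ideal A) (x : A) : Prop := ∀ y : A, y * x ∈ P → y ∈ P

/-- set of members of a list -/
def sl (l : List A) : Set A := {y | y ∈ l}

/-- weakly regular sequence relative to a base ideal -/
def WR (P : Ideal A) : List A → Prop
  | [] => True
  | x :: l => NZD P x ∧ WR (P ⊔ Ideal.span {x}) l

theorem sl_nil : sl ([] : List A) = ∅ := by ext y; simp [sl]

theorem sl_singleton (c : A) : sl [c] = {c} := by ext y; simp [sl]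

theorem sl_cons (x : A) (l : List A) : sl (x :: l) = insert x (sl l) := by
  ext y; simp [sl]

theorem span_sl_cons (x : A) (l : List A) :
    Ideal.span (sl (x :: l)) = Ideal.span {x} ⊔ Ideal.span (sl l) := by
  rw [sl_cons, Ideal.span_insert]

theorem span_sl_append (l₁ l₂ : List A) :
    Ideal.span (sl (l₁ ++ l₂)) = Ideal.span (sl l₁) ⊔ Ideal.span (sl l₂) := by
  rw [show sl (l₁ ++ l₂) = sl l₁ ∪ sl l₂ by ext y; simp [sl], Ideal.span_union]

theorem WR_append₁ {P : Ideal A} {l₁ l₂ : List A} (h : WR P (l₁ ++ l₂)) : WR P l₁ := by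
  induction l₁ generalizing P with
  | nil => trivial
  | cons x l ih => exact ⟨h.1, ih h.2⟩

theorem WR_take {P : Ideal A} {l : List A} (h : WR P l) (j : ℕ) : WR P (l.take j) := by
  refine WR_append₁ (l₂ := l.drop j) ?_
  rw [List.take_append_drop j l]; exact h

theorem WR_last {Q : Ideal A} {l : List A} {c : A} (h : WR Q (l ++ [c])) :
    NZD (Q ⊔ Ideal.span (sl l)) c := by
  induction l generalizing Q with
  | nil =>
      simpa [sl_nil, Ideal.span_empty] using h.1
  | cons x l ih =>
      have := ih (Q := Q ⊔ Ideal.span {x}) h.2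
      rw [span_sl_cons, ← sup_assoc]
      exact this

theorem NZD_pow {P : Ideal A} {x : A} (h : NZD P x) (t : ℕ) : NZD P (x ^ t) := by
  induction t with
  | zero => intro y hy; simpa using hy
  | succ t ih =>
      intro y hy
      have : (y * x) * x ^ t ∈ P := by
        have e : y * x ^ (t+1) = y * x * x ^ t := by ring
        rwa [e] at hy
      exact h y (ih _ this)

/-- key: the first element of a weakly regular sequence is NZD modulo the rest -/
theorem S1 {P : Ideal A} {x : A} {l : List A} (h : WR P (x :: l)) :
    ∀ z : A, z * x ∈ P ⊔ Ideal.span (sl l) → z ∈ P ⊔ Ideal.span (sl l) := by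
  induction l using List.reverseRecOn with
  | nil =>
      intro z hz
      rw [sl_nil, Ideal.span_empty, sup_bot_eq] at hz ⊢
      exact h.1 z hz
  | append_singleton l' c ih =>
      intro z hz
      rw [span_sl_append, ← sup_assoc, sl_singleton] at hz
      obtain ⟨u, hu, w, hw, huw⟩ := Submodule.mem_sup.mp hz
      obtain ⟨v, hv⟩ := Ideal.mem_span_singleton'.mp hw
      have hlast : NZD (P ⊔ Ideal.span (sl (x :: l'))) c :=
        WR_last (Q := P) (l := x :: l') h
      have hvmem : v ∈ P ⊔ Ideal.span (sl (x :: l')) := by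
        apply hlast
        have hzx : z * x ∈ P ⊔ Ideal.span (sl (x :: l')) := by
          apply Ideal.mul_mem_left
          exact Submodule.mem_sup_right (Ideal.subset_span (by simp [sl]))
        have hu' : u ∈ P ⊔ Ideal.span (sl (x :: l')) := by
          refine Submodule.mem_sup.mpr ?_
          obtain ⟨u₁, hu₁, u₂, hu₂, huu⟩ := Submodule.mem_sup.mp hu
          exact ⟨u₁, hu₁, u₂, Ideal.span_mono (by intro y hy; simp [sl] at hy ⊢; tauto) hu₂, huu⟩
        have : v * c = z * x - u := by rw [hv, ← huw]; ring
        rw [this]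
        exact sub_mem hzx hu'
      rw [span_sl_cons, ← sup_assoc, sup_comm P (Ideal.span {x}), sup_assoc] at hvmem
      obtain ⟨w₁, hw₁, v₁, hv₁, hvv⟩ := Submodule.mem_sup.mp hvmem
      obtain ⟨s, hs⟩ := Ideal.mem_span_singleton'.mp hw₁
      have key : (z - s * c) * x ∈ P ⊔ Ideal.span (sl l') := by
        have e : (z - s * c) * x = (z * x) - (s * x) * c := by ring
        rw [e, ← huw, ← hv, ← hvv, ← hs]
        have : u + (s * x + v₁) * c - s * x * c = u + v₁ * c := by ring
        rw [this]
        exact add_mem hu (Ideal.mul_mem_right c _ hv₁)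
      have hWR : WR P (x :: l') := WR_append₁ (l₁ := x :: l') (l₂ := [c]) h
      have := ih hWR _ key
      rw [span_sl_append, ← sup_assoc, sl_singleton]
      have hz' : z = (z - s * c) + s * c := by ring
      rw [hz']
      exact add_mem (Submodule.mem_sup_left this)
        (Submodule.mem_sup_right (Ideal.mem_span_singleton'.mpr ⟨s, rfl⟩))

theorem WRpos {Q : Ideal A} {l : List A} (h : WR Q l) :
    ∀ j (hj : j < l.length), NZD (Q ⊔ Ideal.span (sl (l.take j))) (l[j]'hj) := by
  induction l generalizing Q with
  | nil => intro j hj; simp at hj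
  | cons c l ih =>
      intro j hj
      match j with
      | 0 => simpa [sl_nil, Ideal.span_empty] using h.1
      | j + 1 =>
          have := ih (Q := Q ⊔ Ideal.span {c}) h.2 j (by simpa using hj)
          rw [List.take_succ_cons, span_sl_cons, ← sup_assoc]
          simpa using this

theorem WR_of_pos {Q : Ideal A} {l : List A}
    (h : ∀ j (hj : j < l.length), NZD (Q ⊔ Ideal.span (sl (l.take j))) (l[j]'hj)) :
    WR Q l := by
  induction l generalizing Q with
  | nil => trivial
  | cons c l ih =>
      constructor
      · have h0 : NZD (Q ⊔ Ideal.span (sl ((c :: l).take 0))) c := h 0 (by simp)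
        simpa [sl_nil, Ideal.span_empty] using h0
      · refine ih ?_
        intro j hj
        have := h (j+1) (by simpa using hj)
        rw [List.take_succ_cons, span_sl_cons, ← sup_assoc] at this
        simpa using this

/-- the first element of a weakly regular sequence may be raised to a power -/
theorem P1 {P : Ideal A} {x : A} {l : List A} (h : WR P (x :: l)) :
    ∀ t : ℕ, 1 ≤ t → WR P (x ^ t :: l) := by
  intro t
  induction t with
  | zero => intro h10; omega
  | succ t ih =>
      intro _
      by_cases ht : 1 ≤ t
      · have Wt : WR P (x ^ t :: l) := ih ht
        refine WR_of_pos ?_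
        intro j hj
        match j with
        | 0 =>
            intro y hy
            rw [List.take_zero, sl_nil, Ideal.span_empty, sup_bot_eq] at hy ⊢
            exact NZD_pow h.1 (t+1) y hy
        | j + 1 =>
            simp only [List.getElem_cons_succ, List.take_succ_cons, span_sl_cons, ← sup_assoc]
            intro y hy
            have hj' : j < l.length := by simpa using hj
            -- y * l[j] ∈ P ⊔ (x^{t+1}) ⊔ span(take j l)
            have hle : Ideal.span {x ^ (t+1)} ≤ Ideal.span {x ^ t} := by
              rw [Ideal.span_singleton_le_span_singleton]
              exact pow_dvd_pow x (by omega)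
            have hy1 : y * l[j] ∈ P ⊔ Ideal.span {x ^ t} ⊔ Ideal.span (sl (l.take j)) :=
              SetLike.le_def.mp (sup_le_sup_right (sup_le_sup_left hle _) _) hy
            have h2 := WRpos Wt (j+1) (by simpa using hj')
            rw [List.take_succ_cons, span_sl_cons, ← sup_assoc] at h2
            have hymem : y ∈ P ⊔ Ideal.span {x ^ t} ⊔ Ideal.span (sl (l.take j)) := by
              simpa using h2 y (by simpa using hy1)
            -- decompose y = q + s x^t + σ
            obtain ⟨w₁, hw₁, σ, hσ, hyd⟩ := Submodule.mem_sup.mp hymem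
            obtain ⟨q, hq, sx, hsx, hqw⟩ := Submodule.mem_sup.mp hw₁
            obtain ⟨s, hs⟩ := Ideal.mem_span_singleton'.mp hsx
            -- decompose y * l[j] = q₂ + u x^{t+1} + γ₂
            obtain ⟨w₂, hw₂, γ₂, hγ₂, hyd2⟩ := Submodule.mem_sup.mp hy
            obtain ⟨q₂, hq₂, ux, hux, hqw₂⟩ := Submodule.mem_sup.mp hw₂
            obtain ⟨u, hu⟩ := Ideal.mem_span_singleton'.mp hux
            have h1 : y = q + s * x ^ t + σ := by rw [← hyd, ← hqw, ← hs]
            have h2 : y * l[j] = q₂ + u * x ^ (t+1) + γ₂ := by rw [← hyd2, ← hqw₂, ← hu]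
            have key : (s * l[j] - u * x) * x ^ t ∈ P ⊔ Ideal.span (sl (l.take j)) := by
              have e : (s * l[j] - u * x) * x ^ t
                  = q₂ + γ₂ - q * l[j] - σ * l[j] := by
                linear_combination h2 - (l[j]'hj') * h1
              rw [e]
              have hσc : σ * l[j] ∈ Ideal.span (sl (l.take j)) := Ideal.mul_mem_right _ _ hσ
              have hqc : q * l[j] ∈ P := Ideal.mul_mem_right _ _ hq
              refine sub_mem (sub_mem (add_mem ?_ ?_) ?_) ?_
              · exact Submodule.mem_sup_left hq₂
              · exact Submodule.mem_sup_right hγ₂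
              · exact Submodule.mem_sup_left hqc
              · exact Submodule.mem_sup_right hσc
            have hWRtake : WR P (x ^ t :: l.take j) := by
              have : WR P ((x ^ t :: l).take (j+1)) := WR_take Wt (j+1)
              simpa using this
            have hs' : s * l[j] - u * x ∈ P ⊔ Ideal.span (sl (l.take j)) :=
              S1 hWRtake _ key
            have hsl : s * l[j] ∈ P ⊔ Ideal.span {x} ⊔ Ideal.span (sl (l.take j)) := by
              have : s * l[j] = (s * l[j] - u * x) + u * x := by ring
              rw [this]
              refine add_mem ?_ ?_
              · exact SetLike.le_def.mp (sup_le_sup_right le_sup_left _)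
                  (by simpa using hs')
              · exact Submodule.mem_sup_left (Submodule.mem_sup_right
                  (Ideal.mem_span_singleton'.mpr ⟨u, rfl⟩))
            have h1 := WRpos h (j+1) (by simpa using hj')
            rw [List.take_succ_cons, span_sl_cons, ← sup_assoc] at h1
            have hsmem : s ∈ P ⊔ Ideal.span {x} ⊔ Ideal.span (sl (l.take j)) := by
              simpa using h1 s (by simpa using hsl)
            obtain ⟨w₃, hw₃, γ₃, hγ₃, hsd⟩ := Submodule.mem_sup.mp hsmem
            obtain ⟨q₃, hq₃, vx, hvx, hqw₃⟩ := Submodule.mem_sup.mp hw₃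
            obtain ⟨v, hv⟩ := Ideal.mem_span_singleton'.mp hvx
            -- y = (q + q₃ x^t) + v x^{t+1} + (γ₃ x^t + σ)
            have hyfinal : y = (q + q₃ * x ^ t) + v * x ^ (t+1) + (γ₃ * x ^ t + σ) := by
              rw [← hyd, ← hqw, ← hs, ← hsd, ← hqw₃, ← hv]; ring
            rw [hyfinal]
            refine add_mem (add_mem ?_ ?_) ?_
            · exact Submodule.mem_sup_left (Submodule.mem_sup_left
                (add_mem hq (Ideal.mul_mem_right _ _ hq₃)))
            · exact Submodule.mem_sup_left (Submodule.mem_sup_right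
                (Ideal.mem_span_singleton'.mpr ⟨v, rfl⟩))
            · exact Submodule.mem_sup_right
                (add_mem (Ideal.mul_mem_right _ _ hγ₃) hσ)
      · -- t = 0, so t + 1 = 1
        have : t = 0 := by omega
        subst this
        simpa [pow_one] using h

/-- colon lemma: `(a₁^p,…,aₙ^p) : ∏ aᵢ^(p-1) ⊆ (a₁,…,aₙ)` for weakly regular sequences. -/
theorem LC (p : ℕ) (hp : 2 ≤ p) :
    ∀ (l : List A) (P : Ideal A) (x : A), WR P l →
      (l.map (· ^ (p-1))).prod * x ∈ P ⊔ Ideal.span (sl (l.map (· ^ p))) →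
      x ∈ P ⊔ Ideal.span (sl l) := by
  intro l
  induction l with
  | nil =>
      intro P x _ hx
      simpa [sl_nil, Ideal.span_empty] using hx
  | cons c l' ih =>
      intro P x hWR hx
      simp only [List.map_cons, List.prod_cons, span_sl_cons, ← sup_assoc] at hx
      have hWRp : WR P (c ^ p :: l') := P1 hWR p (by omega)
      have hWRq : WR P (c ^ (p-1) :: l') := P1 hWR (p-1) (by omega)
      have hmem : c ^ (p-1) * x ∈ (P ⊔ Ideal.span {c ^ p}) ⊔ Ideal.span (sl l') := by
        refine ih (P ⊔ Ideal.span {c ^ p}) (c ^ (p-1) * x) hWRp.2 ?_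
        have e : (l'.map (· ^ (p-1))).prod * (c ^ (p-1) * x)
            = c ^ (p-1) * (l'.map (· ^ (p-1))).prod * x := by ring
        rw [e]
        exact hx
      obtain ⟨w, hw, σ, hσ, hws⟩ := Submodule.mem_sup.mp hmem
      obtain ⟨q, hq, ec, hec, hqe⟩ := Submodule.mem_sup.mp hw
      obtain ⟨e', he'⟩ := Ideal.mem_span_singleton'.mp hec
      have key : (x - e' * c) * c ^ (p-1) ∈ P ⊔ Ideal.span (sl l') := by
        have hpe : c ^ (p-1) * c = c ^ p := by
          rw [← pow_succ]
          congr 1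
          omega
        have e2 : (x - e' * c) * c ^ (p-1) = q + σ := by
          have h1 : c ^ (p-1) * x = q + e' * c ^ p + σ := by
            rw [← hws, ← hqe, ← he']
          linear_combination h1 - e' * hpe
        rw [e2]
        exact add_mem (Submodule.mem_sup_left hq) (Submodule.mem_sup_right hσ)
      have hx' : x - e' * c ∈ P ⊔ Ideal.span (sl l') := S1 hWRq _ key
      rw [span_sl_cons, ← sup_assoc, sup_comm P (Ideal.span {c}), sup_assoc]
      have : x = (x - e' * c) + e' * c := by ring
      rw [this]
      exact add_mem (Submodule.mem_sup_right (by simpa using hx'))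
        (Submodule.mem_sup_left (Ideal.mem_span_singleton'.mpr ⟨e', rfl⟩))

theorem sl_ofFn {n : ℕ} (f : Fin n → A) : sl (List.ofFn f) = Set.range f := by
  ext y; simpa [sl] using List.mem_ofFn f y

theorem bridge {n : ℕ} (a : Fin n → A)
    (hreg : ∀ i : Fin n, ∀ x : A,
      x * a i ∈ Ideal.span (a '' {j | j < i}) → x ∈ Ideal.span (a '' {j | j < i})) :
    WR ⊥ (List.ofFn a) := by
  refine WR_of_pos ?_
  intro j hj
  have hjn : j < n := by simpa using hj
  have hget : (List.ofFn a)[j]'hj = a ⟨j, hjn⟩ := by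
    simp [List.getElem_ofFn]
  have hset : sl ((List.ofFn a).take j) = a '' {i | i < (⟨j, hjn⟩ : Fin n)} := by
    ext y
    constructor
    · intro hy
      obtain ⟨i, hi, hiy⟩ := List.mem_iff_getElem.mp hy
      have hi' : i < n := by simp at hi; omega
      have hij : i < j := by simp at hi; omega
      refine ⟨⟨i, hi'⟩, ?_, ?_⟩
      · simpa [Fin.lt_def] using hij
      · rw [← hiy, List.getElem_take, List.getElem_ofFn]
    · rintro ⟨i, hi, rfl⟩
      have hij : (i : ℕ) < j := by simpa [Fin.lt_def] using hi
      refine List.mem_iff_getElem.mpr ⟨i, ?_, ?_⟩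
      · simp; omega
      · rw [List.getElem_take, List.getElem_ofFn]
  rw [hget, hset]
  intro y hy
  rw [bot_sup_eq] at hy ⊢
  exact hreg _ y hy

theorem colon {n p : ℕ} (hp : 2 ≤ p) (a : Fin n → A)
    (hreg : ∀ i : Fin n, ∀ x : A,
      x * a i ∈ Ideal.span (a '' {j | j < i}) → x ∈ Ideal.span (a '' {j | j < i}))
    (x : A) (hx : (∏ i, a i ^ (p-1)) * x ∈ Ideal.span (Set.range fun i => a i ^ p)) :
    x ∈ Ideal.span (Set.range a) := by
  have h1 : (List.map (· ^ (p-1)) (List.ofFn a)).prod = ∏ i, a i ^ (p-1) := by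
    rw [List.map_ofFn, List.prod_ofFn]; rfl
  have h2 : sl (List.map (· ^ p) (List.ofFn a)) = Set.range (fun i => a i ^ p) := by
    rw [List.map_ofFn, sl_ofFn]; rfl
  have := LC p hp (List.ofFn a) ⊥ x (bridge a hreg) (by
    rw [h1, h2, bot_sup_eq]; exact hx)
  rwa [sl_ofFn, bot_sup_eq] at this

section Poly
open MvPolynomial Finset

variable {n p : ℕ}

/-- the ideal `(a₁^p, …, aₙ^p)` of `A` -/
def JA (a : Fin n → A) (p : ℕ) : Ideal A := Ideal.span (Set.range fun i => a i ^ p)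

noncomputable def tF (j : Fin n → ℕ) : Fin n →₀ ℕ := Finsupp.equivFunOnFinite.symm j

theorem tF_apply (j : Fin n → ℕ) (l : Fin n) : tF j l = j l := rfl

theorem tF_inj {j j' : Fin n → ℕ} (h : tF j = tF j') : j = j' :=
  Finsupp.equivFunOnFinite.symm.injective h

def box (n p : ℕ) : Finset (Fin n → ℕ) := Fintype.piFinset fun _ => Finset.range p

theorem mem_box {j : Fin n → ℕ} : j ∈ box n p ↔ ∀ l, j l < p := by
  simp [box, Fintype.mem_piFinset]

/-- the coefficient attached to `j` in the twisted functional -/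
def T (a : Fin n → A) (p : ℕ) (j : Fin n → ℕ) : A :=
  (-1 : A) ^ (∑ l, j l) * ((∏ l, Nat.descFactorial (p-1) (p - 1 - j l) : ℕ) : A)
    * ∏ l, a l ^ j l

/-- the twisted coefficient functional detecting membership in `ImD` modulo `JA` -/
noncomputable def Mb (a : Fin n → A) (p : ℕ) (β : Fin n → ℕ) (h : MvPolynomial (Fin n) A) : A :=
  ∑ j ∈ box n p, T a p j * MvPolynomial.coeff (tF fun l => β l - j l) h

theorem Mb_add (a : Fin n → A) (β : Fin n → ℕ) (h₁ h₂ : MvPolynomial (Fin n) A) :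
    Mb a p β (h₁ + h₂) = Mb a p β h₁ + Mb a p β h₂ := by
  simp [Mb, coeff_add, mul_add, Finset.sum_add_distrib]

theorem Mb_sub (a : Fin n → A) (β : Fin n → ℕ) (h₁ h₂ : MvPolynomial (Fin n) A) :
    Mb a p β (h₁ - h₂) = Mb a p β h₁ - Mb a p β h₂ := by
  simp [Mb, coeff_sub, mul_sub, Finset.sum_sub_distrib]

theorem Mb_sum (a : Fin n → A) (β : Fin n → ℕ) {ι : Type*} (s : Finset ι)
    (F : ι → MvPolynomial (Fin n) A) :
    Mb a p β (∑ i ∈ s, F i) = ∑ i ∈ s, Mb a p β (F i) := by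
  unfold Mb
  rw [Finset.sum_comm]
  refine Finset.sum_congr rfl fun j _ => ?_
  rw [MvPolynomial.coeff_sum, Finset.mul_sum]

theorem T_mul_mem (a : Fin n → A) (i : Fin n) {j : Fin n → ℕ} (hji : j i = p - 1)
    (hp : 1 ≤ p) (c : A) : T a p j * (a i * c) ∈ JA a p := by
  have hprod : (∏ l, a l ^ j l) * a i = (∏ l ∈ univ.erase i, a l ^ j l) * a i ^ p := by
    rw [← Finset.mul_prod_erase univ (fun l => a l ^ j l) (mem_univ i), hji]
    rw [show a i ^ (p-1) * (∏ l ∈ univ.erase i, a l ^ j l) * a i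
        = (∏ l ∈ univ.erase i, a l ^ j l) * (a i ^ (p-1) * a i) by ring, ← pow_succ]
    congr 2
    omega
  have e : T a p j * (a i * c) = ((-1 : A) ^ (∑ l, j l)
      * ((∏ l, Nat.descFactorial (p-1) (p - 1 - j l) : ℕ) : A)
      * (∏ l ∈ univ.erase i, a l ^ j l) * c) * a i ^ p := by
    unfold T
    rw [show ((-1 : A) ^ (∑ l, j l) * _ * (∏ l, a l ^ j l)) * (a i * c)
        = (-1 : A) ^ (∑ l, j l) * ((∏ l, Nat.descFactorial (p-1) (p - 1 - j l) : ℕ) : A)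
          * ((∏ l, a l ^ j l) * a i) * c from by ring, hprod]
    ring
  rw [e]
  exact Ideal.mul_mem_left _ _ (Ideal.subset_span ⟨i, rfl⟩)

theorem Mb_monomial (hp : 1 ≤ p) (a : Fin n → A) (β δ : Fin n → ℕ)
    (hβ : ∀ l, p - 1 ≤ β l) (c : A) :
    Mb a p β (monomial (tF δ) c)
      = if ∀ l, δ l ≤ β l ∧ β l - δ l ≤ p - 1
        then T a p (fun l => β l - δ l) * c else 0 := by
  unfold Mb
  split_ifs with hOK
  · have hsum : (∑ j ∈ box n p, T a p j * MvPolynomial.coeff (tF fun l => β l - j l)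
        (monomial (tF δ) c))
        = T a p (fun l => β l - δ l) * MvPolynomial.coeff
            (tF fun l => β l - (fun l => β l - δ l) l) (monomial (tF δ) c) := by
      refine Finset.sum_eq_single (fun l => β l - δ l) ?_ ?_
      · intro j hj hne
        rw [coeff_monomial, if_neg, mul_zero]
        intro heq
        apply hne
        have := tF_inj heq
        funext l
        have h1 : δ l = β l - j l := congrFun this l
        have h2 : j l < p := mem_box.mp hj l
        have h3 : p - 1 ≤ β l := hβ l
        omega
      · intro hnotin
        exfalso
        apply hnotin
        rw [mem_box]
        intro l
        have := (hOK l).2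
        omega
    have hcond : tF δ = tF (fun l => β l - (fun l => β l - δ l) l) := by
      congr 1
      funext l
      show δ l = β l - (β l - δ l)
      have := (hOK l).1
      omega
    rw [hsum, coeff_monomial, if_pos hcond]
  · refine Finset.sum_eq_zero ?_
    intro j hj
    rw [coeff_monomial, if_neg, mul_zero]
    intro heq
    apply hOK
    intro l
    have h1 : δ l = β l - j l := congrFun (tF_inj heq) l
    have h2 : j l < p := mem_box.mp hj l
    have h3 : p - 1 ≤ β l := hβ l
    omega

theorem cast_mod_eq [CharP A p] (hp : 1 ≤ p) {b : ℕ} (hb : b % p = p - 1) :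
    (b : A) = ((p - 1 : ℕ) : A) := by
  have h := Nat.div_add_mod b p
  calc (b : A) = ((p * (b / p) + b % p : ℕ) : A) := by rw [h]
    _ = (p : A) * ((b / p : ℕ) : A) + ((b % p : ℕ) : A) := by push_cast; ring
    _ = ((p - 1 : ℕ) : A) := by rw [CharP.cast_eq_zero A p, hb]; ring

theorem T_step [CharP A p] (hp : 1 ≤ p) (a : Fin n → A) (i : Fin n) (j₁ j₂ : Fin n → ℕ)
    (hj : ∀ l, j₁ l = if l = i then j₂ l + 1 else j₂ l) (hle : j₁ i ≤ p - 1) (c : A)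
    (ui : ℕ) (hui : (ui : A) = -((j₁ i : ℕ) : A)) :
    T a p j₁ * (c * (ui : A)) = T a p j₂ * (a i * c) := by
  have hii : j₁ i = j₂ i + 1 := by simpa using hj i
  have herase : ∀ l ∈ univ.erase i, j₁ l = j₂ l := by
    intro l hl
    rw [hj l, if_neg (Finset.mem_erase.mp hl).1]
  have hsum : ∑ l, j₁ l = (∑ l, j₂ l) + 1 := by
    have e1 : ∀ l ∈ univ, j₁ l = j₂ l + (if l = i then 1 else 0) := by
      intro l _
      rw [hj l]
      split_ifs <;> omega
    rw [Finset.sum_congr rfl e1, Finset.sum_add_distrib, Finset.sum_ite_eq' univ i (fun _ => 1),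
        if_pos (mem_univ i)]
  have hdf : (∏ l, Nat.descFactorial (p-1) (p - 1 - j₂ l))
      = j₁ i * ∏ l, Nat.descFactorial (p-1) (p - 1 - j₁ l) := by
    have e2 : ∏ l ∈ univ.erase i, Nat.descFactorial (p-1) (p - 1 - j₂ l)
        = ∏ l ∈ univ.erase i, Nat.descFactorial (p-1) (p - 1 - j₁ l) :=
      Finset.prod_congr rfl (fun l hl => by rw [herase l hl])
    rw [← Finset.mul_prod_erase univ (fun l => Nat.descFactorial (p-1) (p - 1 - j₂ l)) (mem_univ i),
        ← Finset.mul_prod_erase univ (fun l => Nat.descFactorial (p-1) (p - 1 - j₁ l)) (mem_univ i),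
        e2]
    have h1 : p - 1 - j₂ i = (p - 1 - j₁ i) + 1 := by omega
    have h2 : p - 1 - (p - 1 - j₁ i) = j₁ i := by omega
    rw [h1, Nat.descFactorial_succ, h2]
    ring
  have hprod : (∏ l, a l ^ j₁ l) = a i * ∏ l, a l ^ j₂ l := by
    have e3 : ∏ l ∈ univ.erase i, a l ^ j₁ l = ∏ l ∈ univ.erase i, a l ^ j₂ l :=
      Finset.prod_congr rfl (fun l hl => by rw [herase l hl])
    rw [← Finset.mul_prod_erase univ (fun l => a l ^ j₁ l) (mem_univ i),
        ← Finset.mul_prod_erase univ (fun l => a l ^ j₂ l) (mem_univ i),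
        e3, hii, pow_succ]
    ring
  unfold T
  rw [hsum, hdf, hprod, hui, pow_succ]
  push_cast
  ring

/-- Main lemma: the functional `Mb` kills the image of `∂ᵢ - aᵢ` modulo `JA`. -/
theorem Mb_D_mem [CharP A p] (hp : 1 ≤ p) (a : Fin n → A) (i : Fin n) (β : Fin n → ℕ)
    (hβ : ∀ l, β l % p = p - 1) (g : MvPolynomial (Fin n) A) :
    Mb a p β (pderiv i g - C (a i) * g) ∈ JA a p := by
  have hβ' : ∀ l, p - 1 ≤ β l := fun l => (hβ l) ▸ Nat.mod_le _ _
  have hcast : ((β i : ℕ) : A) = ((p - 1 : ℕ) : A) := cast_mod_eq hp (hβ i)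
  induction g using MvPolynomial.induction_on' with
  | add g₁ g₂ ih₁ ih₂ =>
      have e : pderiv i (g₁ + g₂) - C (a i) * (g₁ + g₂)
          = (pderiv i g₁ - C (a i) * g₁) + (pderiv i g₂ - C (a i) * g₂) := by
        rw [map_add]; ring
      rw [e, Mb_add]
      exact add_mem ih₁ ih₂
  | monomial u c =>
      rw [pderiv_monomial, C_mul_monomial]
      set δ₂ : Fin n → ℕ := ⇑u with hδ₂
      have hu2 : u = tF δ₂ := (Finsupp.equivFunOnFinite_symm_coe u).symm
      set δ₁ : Fin n → ℕ := fun l => u l - (if l = i then 1 else 0) with hδ₁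
      have hu1 : u - Finsupp.single i 1 = tF δ₁ := by
        ext l
        rw [Finsupp.tsub_apply, Finsupp.single_apply, tF_apply, hδ₁]
        simp [eq_comm]
      rw [hu1, hu2, Mb_sub, Mb_monomial hp a β δ₁ hβ', Mb_monomial hp a β δ₂ hβ']
      have hδ₁i : δ₁ i = u i - 1 := by rw [hδ₁]; simp
      have hδ₁l : ∀ l, l ≠ i → δ₁ l = u l := by intro l hl; rw [hδ₁]; simp [hl]
      have hδ2a : ∀ l, δ₂ l = u l := fun l => rfl
      by_cases hui : u i = 0
      · -- derivative term has coefficient zero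
        have hz : (if ∀ l, δ₁ l ≤ β l ∧ β l - δ₁ l ≤ p - 1
            then T a p (fun l => β l - δ₁ l) * (c * ((u i : ℕ) : A)) else 0) = 0 := by
          split_ifs
          · simp [hui]
          · rfl
        rw [hz, zero_sub]
        refine neg_mem ?_
        split_ifs with hOK
        · refine T_mul_mem a i ?_ hp c
          have h1 := (hOK i).2
          have h2 := hβ' i
          show β i - δ₂ i = p - 1
          have : δ₂ i = 0 := hui
          omega
        · exact zero_mem _
      · by_cases hOK₁ : ∀ l, δ₁ l ≤ β l ∧ β l - δ₁ l ≤ p - 1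
          <;> by_cases hOK₂ : ∀ l, δ₂ l ≤ β l ∧ β l - δ₂ l ≤ p - 1
        · -- both terms present: they cancel
          rw [if_pos hOK₁, if_pos hOK₂]
          have hstep := T_step (A := A) hp a i (fun l => β l - δ₁ l) (fun l => β l - δ₂ l)
            (by
              intro l
              by_cases hl : l = i
              · rw [if_pos hl]
                show β l - δ₁ l = (β l - δ₂ l) + 1
                rw [hl, hδ₁i, hδ2a i]
                have := (hOK₂ i).1
                have hui' : 1 ≤ u i := Nat.one_le_iff_ne_zero.mpr hui
                have e2 := hδ2a i
                omega
              · rw [if_neg hl]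
                show β l - δ₁ l = β l - δ₂ l
                rw [hδ₁l l hl, hδ2a l])
            (by
              show β i - δ₁ i ≤ p - 1
              exact (hOK₁ i).2) c (u i)
            (by
              show ((u i : ℕ) : A) = -(((β i - δ₁ i : ℕ)) : A)
              have h1 : (δ₂ i : ℕ) = u i := rfl
              have h2 : u i ≤ β i := h1 ▸ (hOK₂ i).1
              have hui' : 1 ≤ u i := Nat.one_le_iff_ne_zero.mpr hui
              have h3 : β i - δ₁ i = (β i - u i) + 1 := by
                rw [hδ₁i]; omega
              have h4 : β i = (β i - u i) + u i := by omega
              rw [h3]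
              push_cast
              have h6 : ((β i : ℕ) : A) = ((β i - u i : ℕ) : A) + ((u i : ℕ) : A) := by
                rw [Nat.cast_sub h2]; ring
              have h7 : ((β i : ℕ) : A) = -1 := by
                rw [hcast, Nat.cast_sub (show 1 ≤ p from hp), CharP.cast_eq_zero A p]
                push_cast; ring
              have h8 := h6.symm.trans h7
              linear_combination h8)
          rw [hstep, sub_self]
          exact zero_mem _
        · -- derivative term present, other absent: coefficient `u i` vanishes mod p
          rw [if_pos hOK₁, if_neg hOK₂]
          have hviol : ¬(δ₂ i ≤ β i ∧ β i - δ₂ i ≤ p - 1) := by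
            intro hcon
            apply hOK₂
            intro l
            by_cases hl : l = i
            · subst hl; exact hcon
            · have h1 := (hOK₁ l).1
              have h2 := (hOK₁ l).2
              have h3 : δ₁ l = δ₂ l := by rw [hδ₁l l hl, hδ2a l]
              rw [← h3]; exact ⟨h1, h2⟩
          have hui' : 1 ≤ u i := Nat.one_le_iff_ne_zero.mpr hui
          have h1 : δ₁ i ≤ β i := (hOK₁ i).1
          have h2 : β i - δ₁ i ≤ p - 1 := (hOK₁ i).2
          -- so u i = β i + 1, hence `(u i : A) = 0`
          have hbi : u i = β i + 1 := by
            rcases Nat.lt_or_ge (β i) (u i) with h | h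
            · omega
            · exfalso; apply hviol; have e := hδ2a i; constructor <;> omega
          have hcz : ((u i : ℕ) : A) = 0 := by
            rw [hbi]
            push_cast
            rw [hcast, Nat.cast_sub (show 1 ≤ p from hp), CharP.cast_eq_zero A p]
            push_cast
            ring
          rw [hcz, mul_zero, mul_zero, sub_zero]
          exact zero_mem _
        · -- derivative term absent, other present with `βᵢ - uᵢ = p - 1`
          rw [if_neg hOK₁, if_pos hOK₂]
          rw [zero_sub]
          refine neg_mem (T_mul_mem a i ?_ hp c)
          have hui' : 1 ≤ u i := Nat.one_le_iff_ne_zero.mpr hui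
          have hviol : ¬(δ₁ i ≤ β i ∧ β i - δ₁ i ≤ p - 1) := by
            intro hcon
            apply hOK₁
            intro l
            by_cases hl : l = i
            · subst hl; exact hcon
            · have h3 : δ₁ l = δ₂ l := by rw [hδ₁l l hl, hδ2a l]
              rw [h3]; exact hOK₂ l
          have h1 := (hOK₂ i).1
          have h2 := (hOK₂ i).2
          have e := hδ2a i
          show β i - δ₂ i = p - 1
          omega
        · rw [if_neg hOK₁, if_neg hOK₂, sub_zero]
          exact zero_mem _

/-- coefficients of `g^p` vanish off multiples of `p` -/
theorem coeff_pow_p [CharP A p] (hp : p.Prime) (g : MvPolynomial (Fin n) A)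
    (δ : Fin n →₀ ℕ) (hδ : ¬ ∀ l, p ∣ δ l) : MvPolynomial.coeff δ (g ^ p) = 0 := by
  haveI : Fact p.Prime := ⟨hp⟩
  induction g using MvPolynomial.induction_on' with
  | monomial u c =>
      rw [MvPolynomial.monomial_pow, coeff_monomial, if_neg, ]
      intro heq
      apply hδ
      intro l
      rw [← heq]
      exact ⟨u l, by rw [Finsupp.smul_apply, smul_eq_mul]⟩
  | add g₁ g₂ ih₁ ih₂ =>
      rw [add_pow_char, coeff_add, ih₁, ih₂, add_zero]

theorem pderiv_iterate_monomial (i : Fin n) (u : Fin n →₀ ℕ) (c : A) (s : ℕ) :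
    (pderiv i)^[s] (monomial u c)
      = monomial (u - Finsupp.single i s) (c * ((u i).descFactorial s : ℕ)) := by
  induction s with
  | zero => simp
  | succ s ih =>
      rw [Function.iterate_succ_apply', ih, pderiv_monomial]
      have he : u - Finsupp.single i s - Finsupp.single i 1 = u - Finsupp.single i (s+1) := by
        ext l
        rw [Finsupp.tsub_apply, Finsupp.tsub_apply, Finsupp.tsub_apply]
        by_cases hl : l = i
        · subst hl
          rw [Finsupp.single_eq_same, Finsupp.single_eq_same, Finsupp.single_eq_same]
          omega
        · rw [Finsupp.single_eq_of_ne' (Ne.symm hl), Finsupp.single_eq_of_ne' (Ne.symm hl),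
              Finsupp.single_eq_of_ne' (Ne.symm hl)]
          omega
      have hc : (u - Finsupp.single i s : Fin n →₀ ℕ) i = u i - s := by
        rw [Finsupp.tsub_apply, Finsupp.single_eq_same]
      rw [he, hc]
      congr 1
      rw [Nat.descFactorial_succ]
      push_cast
      ring

theorem p_dvd_descFactorial (hp : 1 ≤ p) (m : ℕ) : p ∣ m.descFactorial p := by
  rcases Nat.lt_or_ge m p with h | h
  · rw [Nat.descFactorial_eq_zero_iff_lt.mpr h]
    exact dvd_zero p
  · rw [Nat.descFactorial_eq_prod_range]
    have hmem : m % p ∈ Finset.range p := Finset.mem_range.mpr (Nat.mod_lt _ (by omega))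
    refine Dvd.dvd.trans ?_ (Finset.dvd_prod_of_mem _ hmem)
    refine ⟨m / p, ?_⟩
    have h2 := Nat.div_add_mod m p
    generalize m / p = q at h2 ⊢
    generalize hpq : p * q = pq
    rw [hpq] at h2
    omega

theorem pderiv_iterate_add (i : Fin n) (s : ℕ) (g₁ g₂ : MvPolynomial (Fin n) A) :
    (pderiv i)^[s] (g₁ + g₂) = (pderiv i)^[s] g₁ + (pderiv i)^[s] g₂ := by
  induction s generalizing g₁ g₂ with
  | zero => rfl
  | succ s ih => rw [Function.iterate_succ_apply, Function.iterate_succ_apply,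
      Function.iterate_succ_apply, map_add, ih]

theorem pderiv_iterate_p [CharP A p] (hp : 1 ≤ p) (i : Fin n) (g : MvPolynomial (Fin n) A) :
    (pderiv i)^[p] g = 0 := by
  induction g using MvPolynomial.induction_on' with
  | monomial u c =>
      rw [pderiv_iterate_monomial]
      have : ((((u i).descFactorial p : ℕ)) : A) = 0 :=
        (CharP.cast_eq_zero_iff A p _).mpr (p_dvd_descFactorial hp _)
      rw [this, mul_zero, monomial_zero]
  | add g₁ g₂ ih₁ ih₂ => rw [pderiv_iterate_add, ih₁, ih₂, add_zero]

/-- `aᵢ^p · h` lies in the image of `∂ᵢ - aᵢ` -/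
theorem Cp_mul_mem [CharP A p] (hp : 1 ≤ p) (a : Fin n → A) (i : Fin n)
    (h : MvPolynomial (Fin n) A) :
    ∃ g : MvPolynomial (Fin n) A,
      pderiv i g - C (a i) * g = C (a i) ^ p * h := by
  refine ⟨-(∑ j ∈ Finset.range p, C (a i) ^ (p - 1 - j) * (pderiv i)^[j] h), ?_⟩
  have hd : pderiv i (∑ j ∈ Finset.range p, C (a i) ^ (p-1-j) * (pderiv i)^[j] h)
      = ∑ j ∈ Finset.range p, C (a i) ^ (p - (j+1)) * (pderiv i)^[j+1] h := by
    rw [map_sum]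
    refine Finset.sum_congr rfl fun j hj => ?_
    have hexp : p - (j+1) = p - 1 - j := by omega
    rw [hexp, ← C_pow, pderiv_C_mul, C_pow, Function.iterate_succ_apply']
  have hm : C (a i) * (∑ j ∈ Finset.range p, C (a i) ^ (p-1-j) * (pderiv i)^[j] h)
      = ∑ j ∈ Finset.range p, C (a i) ^ (p - j) * (pderiv i)^[j] h := by
    rw [Finset.mul_sum]
    refine Finset.sum_congr rfl fun j hj => ?_
    have hjp : j < p := Finset.mem_range.mp hj
    rw [← mul_assoc, ← pow_succ']
    congr 2
    omega
  have e : pderiv i (-(∑ j ∈ Finset.range p, C (a i) ^ (p - 1 - j) * (pderiv i)^[j] h))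
      - C (a i) * (-(∑ j ∈ Finset.range p, C (a i) ^ (p - 1 - j) * (pderiv i)^[j] h))
      = ∑ j ∈ Finset.range p,
          ((fun j => C (a i) ^ (p - j) * (pderiv i)^[j] h) j
            - (fun j => C (a i) ^ (p - j) * (pderiv i)^[j] h) (j+1)) := by
    rw [map_neg, hd, mul_neg, sub_neg_eq_add, hm, Finset.sum_sub_distrib]
    ring
  have hfin := Finset.sum_range_sub' (fun j => C (a i) ^ (p - j) * (pderiv i)^[j] h) p
  rw [e, hfin]
  simp only [Nat.sub_self, pow_zero, one_mul, Nat.sub_zero, Function.iterate_zero_apply]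
  rw [pderiv_iterate_p hp i h]
  ring

/-- evaluation of `Mb` on a polynomial supported on multiples of `p` -/
theorem Mb_eval [CharP A p] (hp : 1 ≤ p) (a : Fin n → A) (β : Fin n → ℕ)
    (hβ : ∀ l, β l % p = p - 1) (F : MvPolynomial (Fin n) A)
    (hF : ∀ δ : Fin n →₀ ℕ, (¬ ∀ l, p ∣ δ l) → MvPolynomial.coeff δ F = 0) :
    Mb a p β F = (-1:A) ^ (∑ _l : Fin n, (p-1)) * (∏ l, a l ^ (p-1))
      * MvPolynomial.coeff (tF fun l => β l - (p-1)) F := by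
  unfold Mb
  have hsum : (∑ j ∈ box n p, T a p j * MvPolynomial.coeff (tF fun l => β l - j l) F)
      = T a p (fun _ => p - 1)
        * MvPolynomial.coeff (tF fun l => β l - (fun _ => p - 1) l) F := by
    refine Finset.sum_eq_single (fun _ => p - 1) ?_ ?_
    · intro j hj hne
      have hex : ∃ l, j l ≠ p - 1 := by
        by_contra hcon
        push_neg at hcon
        exact hne (funext hcon)
      obtain ⟨l, hl⟩ := hex
      have hjl : j l < p := mem_box.mp hj l
      rw [hF _ ?_, mul_zero]
      intro hdvd
      have hd := hdvd l
      rw [tF_apply] at hd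
      obtain ⟨d, hdl⟩ := hd
      have h2 := Nat.div_add_mod (β l) p
      rw [hβ l] at h2
      generalize hq : β l / p = q at h2
      generalize hpq : p * q = pq at h2
      generalize hpd : p * d = pd at hdl
      have hple : p - 1 ≤ β l := (hβ l) ▸ Nat.mod_le _ _
      -- β l - j l = (p - 1 - j l) + pq  and  = pd, with 1 ≤ p - 1 - j l ≤ p - 1
      have hpqd : pq % p = 0 := by rw [← hpq, Nat.mul_mod_right]
      have hpdd : pd % p = 0 := by rw [← hpd, Nat.mul_mod_right]
      have he1 : β l - j l = (p - 1 - j l) + pq := by omega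
      have he2 : (p - 1 - j l + pq) % p = p - 1 - j l := by
        conv_lhs => rw [← Nat.div_add_mod pq p, hpqd, add_zero]
        rw [Nat.add_mul_mod_self_left]
        exact Nat.mod_eq_of_lt (by omega)
      have := hpdd ▸ (hdl ▸ (he1 ▸ he2))
      omega
    · intro hnot
      exfalso
      exact hnot (mem_box.mpr fun l => by omega)
  rw [hsum]
  unfold T
  simp only [Nat.sub_self, Nat.descFactorial_zero, Finset.prod_const_one, Nat.cast_one, mul_one]

end Poly

end ICPP

/-- `ImD = Σᵢ (∂_{xᵢ} - aᵢ)·A[x₁,…,xₙ]`. -/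
def ImD {A : Type*} [CommRing A] {n : ℕ} (a : Fin n → A) :
    Set (MvPolynomial (Fin n) A) :=
  {h | ∃ g : Fin n → MvPolynomial (Fin n) A,
    h = ∑ i, (MvPolynomial.pderiv i (g i) - MvPolynomial.C (a i) * g i)}

/-- `(a₁,…,aₙ)` is a regular sequence in `A`: each `aᵢ` is a non-zerodivisor modulo
`(a₁,…,a_{i-1})`, and the ideal generated by all `aᵢ` is proper. -/
def IsRegSeq {A : Type*} [CommRing A] {n : ℕ} (a : Fin n → A) : Prop :=
  (∀ i : Fin n, ∀ x : A,
      x * a i ∈ Ideal.span (a '' {j | j < i}) → x ∈ Ideal.span (a '' {j | j < i})) ∧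
    Ideal.span (Set.range a) ≠ ⊤

/-- The Image Conjecture holds in positive characteristic. -/
theorem stmt_15 {k A : Type*} [Field k] [CommRing A] [Algebra k A]
    (p : ℕ) (hp : p.Prime) [CharP k p] {n : ℕ} (a : Fin n → A)
    (ha : IsRegSeq a) :
    IsMZ (ImD a) := by
  obtain ⟨hreg, hproper⟩ := ha
  intro f hf b
  obtain ⟨N, hN1, hN⟩ := hf
  have hA : Nontrivial A := by
    by_contra hcontra
    rw [not_nontrivial_iff_subsingleton] at hcontra
    apply hproper
    rw [Ideal.eq_top_iff_one]
    have h01 : (1 : A) = 0 := Subsingleton.elim _ _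
    rw [h01]
    exact zero_mem _
  haveI : CharP A p := charP_of_injective_algebraMap (algebraMap k A).injective p
  haveI : Fact p.Prime := ⟨hp⟩
  have hp1 : 1 ≤ p := le_of_lt hp.one_lt
  have hp2 : 2 ≤ p := hp.two_le
  set F : MvPolynomial (Fin n) A := f ^ (N * p) with hFdef
  have hFImD : F ∈ ImD a := hN (N * p) (Nat.le_mul_of_pos_right N hp.pos)
  have hFcoeff : ∀ δ : Fin n →₀ ℕ, (¬ ∀ l, p ∣ δ l) → MvPolynomial.coeff δ F = 0 := by
    intro δ hδ
    rw [hFdef, pow_mul]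
    exact ICPP.coeff_pow_p hp (f ^ N) δ hδ
  have hMb : ∀ β : Fin n → ℕ, (∀ l, β l % p = p - 1) → ICPP.Mb a p β F ∈ ICPP.JA a p := by
    intro β hβ
    obtain ⟨g, hg⟩ := hFImD
    rw [hg, ICPP.Mb_sum]
    exact Submodule.sum_mem _ fun i _ => ICPP.Mb_D_mem hp1 a i β hβ (g i)
  have hwδ : ∀ δ : Fin n →₀ ℕ,
      (∏ l, a l ^ (p-1)) * MvPolynomial.coeff δ F ∈ ICPP.JA a p := by
    intro δ
    by_cases hd : ∀ l, p ∣ δ l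
    · have hβ : ∀ l, (δ l + (p - 1)) % p = p - 1 := by
        intro l
        obtain ⟨d, hdl⟩ := hd l
        rw [hdl, Nat.mul_add_mod]
        exact Nat.mod_eq_of_lt (by omega)
      have hMbF := hMb (fun l => δ l + (p-1)) hβ
      have hEXT := ICPP.Mb_eval hp1 a (fun l => δ l + (p-1)) hβ F hFcoeff
      have harg : ICPP.tF (fun l => (fun l => δ l + (p-1)) l - (p-1)) = δ := by
        ext l
        rw [ICPP.tF_apply]
        show δ l + (p-1) - (p-1) = δ l
        omega
      rw [harg] at hEXT
      rw [hEXT] at hMbF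
      have hone : ((-1 : A) ^ (∑ _l : Fin n, (p-1))) * ((-1 : A) ^ (∑ _l : Fin n, (p-1))) = 1 := by
        rw [← pow_add, show (∑ _l : Fin n, (p-1)) + (∑ _l : Fin n, (p-1))
            = 2 * (∑ _l : Fin n, (p-1)) by ring, pow_mul]
        simp
      have h2 := Ideal.mul_mem_left _ ((-1 : A) ^ (∑ _l : Fin n, (p-1))) hMbF
      have e3 : (-1:A) ^ (∑ _l : Fin n, (p-1))
            * ((-1:A) ^ (∑ _l : Fin n, (p-1)) * (∏ l, a l ^ (p-1)) * MvPolynomial.coeff δ F)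
          = (∏ l, a l ^ (p-1)) * MvPolynomial.coeff δ F := by
        rw [show (-1:A) ^ (∑ _l : Fin n, (p-1))
            * ((-1:A) ^ (∑ _l : Fin n, (p-1)) * (∏ l, a l ^ (p-1)) * MvPolynomial.coeff δ F)
            = ((-1:A) ^ (∑ _l : Fin n, (p-1)) * (-1:A) ^ (∑ _l : Fin n, (p-1)))
              * ((∏ l, a l ^ (p-1)) * MvPolynomial.coeff δ F) from by ring, hone, one_mul]
      rwa [e3] at h2
    · rw [hFcoeff δ hd, mul_zero]
      exact zero_mem _
  have hcoeffI : ∀ δ, MvPolynomial.coeff δ F ∈ Ideal.span (Set.range a) :=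
    fun δ => ICPP.colon hp2 a hreg _ (hwδ δ)
  set Jx : Ideal (MvPolynomial (Fin n) A)
    := Ideal.map (MvPolynomial.C : A →+* MvPolynomial (Fin n) A) (ICPP.JA a p) with hJx
  have hFrad : F ∈ Jx.radical := by
    rw [← MvPolynomial.support_sum_monomial_coeff F]
    refine Submodule.sum_mem _ fun δ _ => ?_
    have h1 : MvPolynomial.coeff δ F ∈ (ICPP.JA a p).radical := by
      have hle : Ideal.span (Set.range a) ≤ (ICPP.JA a p).radical := by
        rw [Ideal.span_le]
        rintro _ ⟨i, rfl⟩
        exact Ideal.mem_radical_iff.mpr ⟨p, Ideal.subset_span ⟨i, rfl⟩⟩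
      exact hle (hcoeffI δ)
    obtain ⟨m, hm⟩ := Ideal.mem_radical_iff.mp h1
    have hC : MvPolynomial.C (MvPolynomial.coeff δ F) ∈ Jx.radical := by
      refine Ideal.mem_radical_iff.mpr ⟨m, ?_⟩
      rw [← map_pow]
      exact Ideal.mem_map_of_mem _ hm
    have he : MvPolynomial.monomial δ (MvPolynomial.coeff δ F)
        = MvPolynomial.C (MvPolynomial.coeff δ F) * MvPolynomial.monomial δ 1 := by
      rw [MvPolynomial.C_mul_monomial, mul_one]
    rw [he]
    exact Ideal.mul_mem_right _ _ hC
  obtain ⟨M, hM⟩ := Ideal.mem_radical_iff.mp hFrad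
  refine ⟨N * p * (M + 1), ?_, ?_⟩
  · have h1 : 0 < N := hN1
    have h2 : 0 < p := hp.pos
    exact Nat.one_le_iff_ne_zero.mpr (by positivity)
  intro m hm'
  have hmemJx : b * f ^ m ∈ Jx := by
    have hFM : F ^ (M+1) ∈ Jx := by
      rw [pow_succ]
      exact Ideal.mul_mem_right _ _ hM
    have hsplit : f ^ m = f ^ (m - N*p*(M+1)) * F ^ (M+1) := by
      rw [hFdef, ← pow_mul, ← pow_add]
      congr 1
      have hKm := hm'
      generalize hK : N*p*(M+1) = K at hKm ⊢
      omega
    rw [hsplit, ← mul_assoc]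
    exact Ideal.mul_mem_left _ _ hFM
  -- `Jx ⊆ ImD a`
  have heq : ICPP.JA a p = Ideal.span (Set.range fun i => a i ^ p) := rfl
  rw [hJx, heq, Ideal.map_span, ← Set.range_comp] at hmemJx
  obtain ⟨cfun, hcfun⟩ := (Submodule.mem_span_range_iff_exists_fun _).mp hmemJx
  choose g hg using fun i => ICPP.Cp_mul_mem hp1 a i (cfun i)
  refine ⟨g, ?_⟩
  rw [← hcfun]
  refine Finset.sum_congr rfl fun i _ => ?_
  rw [hg i, smul_eq_mul]
  show cfun i * (MvPolynomial.C ∘ fun i => a i ^ p) i = MvPolynomial.C (a i) ^ p * cfun i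
  simp only [Function.comp_apply, map_pow]
  ring
end

section
/- Let k be a field of characteristic p > 0, A a commutative k-algebra, a_1,…,a_n ∈ A a regular sequence in A, and ImD = Σ_{i=1}^n (∂_{x_i} − a_i)·A[x_1,…,x_n]. Let f ∈ A[x_1,…,x_n] with monomial coefficients f_a (f = Σ f_a x^a). If f^p ∈ ImD, then for every multi-index a the element f_a^p belongs to the ideal I of A generated by a_1,…,a_n. -/
section RegList

variable {A : Type*} [CommRing A]

/-- Regular sequence (as a list) relative to a base ideal `J`. -/
def RegL (J : Ideal A) : List A → Prop
  | [] => True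
  | b :: l => (∀ x : A, x * b ∈ J → x ∈ J) ∧ RegL (J ⊔ Ideal.span {b}) l

lemma span_list_nil : Ideal.span {y : A | y ∈ ([] : List A)} = ⊥ := by
  convert Ideal.span_empty
  ext x; simp

lemma span_list_cons (b : A) (l : List A) :
    Ideal.span {y : A | y ∈ b :: l} = Ideal.span {b} ⊔ Ideal.span {y | y ∈ l} := by
  rw [← Ideal.span_union]
  congr 1
  ext x; simp [List.mem_cons]

lemma span_list_append_singleton (l : List A) (d : A) :
    Ideal.span {y : A | y ∈ l ++ [d]} = Ideal.span {y | y ∈ l} ⊔ Ideal.span {d} := by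
  rw [← Ideal.span_union]
  congr 1
  ext x; simp [List.mem_append, or_comm]

lemma nzd_pow {J : Ideal A} {b : A} (hb : ∀ x : A, x * b ∈ J → x ∈ J) :
    ∀ (e : ℕ) (x : A), x * b ^ e ∈ J → x ∈ J := by
  intro e
  induction e with
  | zero => intro x h; simpa using h
  | succ e ih =>
    intro x h
    refine ih x (hb _ ?_)
    rw [mul_assoc, ← pow_succ]; exact h

lemma regL_append_left : ∀ (l₁ l₂ : List A) (J : Ideal A), RegL J (l₁ ++ l₂) → RegL J l₁ := by
  intro l₁
  induction l₁ with
  | nil => intro _ _ _; trivial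
  | cons b l ih =>
    intro l₂ J h
    exact ⟨h.1, ih l₂ _ h.2⟩

lemma regL_nzd_last : ∀ (l : List A) (J : Ideal A) (d : A), RegL J (l ++ [d]) →
    ∀ x : A, x * d ∈ J ⊔ Ideal.span {y | y ∈ l} → x ∈ J ⊔ Ideal.span {y | y ∈ l} := by
  intro l
  induction l with
  | nil =>
    intro J d h x hx
    rw [span_list_nil, sup_bot_eq] at hx ⊢
    exact h.1 x hx
  | cons c l ih =>
    intro J d h x hx
    rw [span_list_cons, ← sup_assoc] at hx ⊢
    exact ih (J ⊔ Ideal.span {c}) d h.2 x hx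

lemma regL_transNZD : ∀ (l : List A) (J : Ideal A) (b : A), RegL J (b :: l) →
    ∀ x : A, x * b ∈ J ⊔ Ideal.span {y | y ∈ l} → x ∈ J ⊔ Ideal.span {y | y ∈ l} := by
  intro l
  induction l using List.reverseRecOn with
  | nil =>
    intro J b h x hx
    rw [span_list_nil, sup_bot_eq] at hx ⊢
    exact h.1 x hx
  | append_singleton l' d ih =>
    intro J b h x hx
    have hreg : RegL J ((b :: l') ++ [d]) := h
    have hbl' : RegL J (b :: l') := regL_append_left _ _ _ hreg
    rw [span_list_append_singleton, ← sup_assoc] at hx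
    -- decompose x * b = u + y * d
    obtain ⟨u, hu, w, hw, huw⟩ := Submodule.mem_sup.mp hx
    obtain ⟨y, hy⟩ := Ideal.mem_span_singleton'.mp hw
    -- y * d ∈ J ⊔ span (b :: l')
    have hyd : y * d ∈ J ⊔ Ideal.span {z | z ∈ b :: l'} := by
      have hxb : x * b ∈ J ⊔ Ideal.span {z | z ∈ b :: l'} := by
        refine Submodule.mem_sup_right ?_
        rw [span_list_cons]
        exact Submodule.mem_sup_left (Ideal.mem_span_singleton'.mpr ⟨x, rfl⟩)
      have hu' : u ∈ J ⊔ Ideal.span {z | z ∈ b :: l'} := by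
        refine Submodule.mem_sup.mpr ?_
        obtain ⟨u1, hu1, u2, hu2, h12⟩ := Submodule.mem_sup.mp hu
        exact ⟨u1, hu1, u2, by
          refine Ideal.span_mono ?_ hu2
          intro z hz; exact List.mem_cons_of_mem _ hz, h12⟩
      have : y * d = x * b - u := by rw [← huw, hy]; ring
      rw [this]
      exact Submodule.sub_mem _ hxb hu'
    have hy' := regL_nzd_last (b :: l') J d hreg y hyd
    -- y = s + z * b with s ∈ J ⊔ span l'
    rw [span_list_cons, show J ⊔ (Ideal.span {b} ⊔ Ideal.span {z | z ∈ l'}) =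
      (J ⊔ Ideal.span {z | z ∈ l'}) ⊔ Ideal.span {b} by rw [sup_assoc, sup_comm (Ideal.span {b})]] at hy'
    obtain ⟨s, hs, w', hw', hsw⟩ := Submodule.mem_sup.mp hy'
    obtain ⟨z, hz⟩ := Ideal.mem_span_singleton'.mp hw'
    -- (x - z * d) * b = u + s * d
    have hkey : (x - z * d) * b ∈ J ⊔ Ideal.span {y | y ∈ l'} := by
      have : (x - z * d) * b = u + s * d := by
        have h1 : x * b = u + y * d := by rw [← huw, hy]
        have h2 : y = s + z * b := by rw [← hsw, hz]
        rw [sub_mul, h1, h2]; ring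
      rw [this]
      exact Submodule.add_mem _ hu (Ideal.mul_mem_right d _ hs)
    have := ih J b hbl' (x - z * d) hkey
    rw [span_list_append_singleton, ← sup_assoc]
    refine Submodule.mem_sup.mpr ⟨x - z * d, this, z * d,
      Ideal.mem_span_singleton'.mpr ⟨z, rfl⟩, by ring⟩

lemma regL_transNZD_pow (l : List A) (J : Ideal A) (b : A) (h : RegL J (b :: l)) :
    ∀ (e : ℕ) (x : A), x * b ^ e ∈ J ⊔ Ideal.span {y | y ∈ l} →
      x ∈ J ⊔ Ideal.span {y | y ∈ l} := by
  intro e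
  induction e with
  | zero => intro x hx; simpa using hx
  | succ e ih =>
    intro x hx
    refine ih x (regL_transNZD l J b h _ ?_)
    rw [mul_assoc, ← pow_succ]; exact hx

end RegList
section RegList2

variable {A : Type*} [CommRing A]

lemma regL_coreStep : ∀ (l : List A) (J : Ideal A) (b : A) (e : ℕ),
    RegL J (b :: l) → RegL (J ⊔ Ideal.span {b ^ e}) l →
    RegL (J ⊔ Ideal.span {b ^ (e + 1)}) l := by
  intro l
  induction l with
  | nil => intro _ _ _ _ _; trivial
  | cons c l' ih =>
    intro J b e h1 h2
    obtain ⟨hb, hc, hrest⟩ := h1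
    obtain ⟨hce, hrest_e⟩ := h2
    constructor
    · -- c is NZD mod J ⊔ (b^(e+1))
      intro x hx
      have hx' : x * c ∈ J ⊔ Ideal.span {b ^ e} := by
        obtain ⟨u, hu, w, hw, huw⟩ := Submodule.mem_sup.mp hx
        obtain ⟨z, hz⟩ := Ideal.mem_span_singleton'.mp hw
        refine Submodule.mem_sup.mpr ⟨u, hu, w, ?_, huw⟩
        rw [← hz, pow_succ]
        exact Ideal.mem_span_singleton'.mpr ⟨z * b, by ring⟩
      obtain ⟨j, hj, w, hw, hjw⟩ := Submodule.mem_sup.mp (hce x hx')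
      obtain ⟨y, hy⟩ := Ideal.mem_span_singleton'.mp hw
      -- y * b^e * c ∈ J ⊔ (b^(e+1))
      have h5 : y * b ^ e * c ∈ J ⊔ Ideal.span {b ^ (e + 1)} := by
        have : y * b ^ e * c = x * c - j * c := by rw [← hjw, ← hy]; ring
        rw [this]
        exact Submodule.sub_mem _ hx (Submodule.mem_sup_left (Ideal.mul_mem_right c _ hj))
      obtain ⟨j', hj', w', hw', hjw'⟩ := Submodule.mem_sup.mp h5
      obtain ⟨z, hz⟩ := Ideal.mem_span_singleton'.mp hw'
      have h6 : (y * c - z * b) * b ^ e ∈ J := by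
        have : (y * c - z * b) * b ^ e = j' := by
          have : y * b ^ e * c = j' + z * b ^ (e + 1) := by rw [← hjw', hz]
          rw [sub_mul]
          rw [show y * c * b ^ e = y * b ^ e * c by ring, this, pow_succ]
          ring
        rw [this]; exact hj'
      have h7 : y * c - z * b ∈ J := nzd_pow hb e _ h6
      have h8 : y * c ∈ J ⊔ Ideal.span {b} := by
        have : y * c = (y * c - z * b) + z * b := by ring
        rw [this]
        exact Submodule.add_mem _ (Submodule.mem_sup_left h7)
          (Submodule.mem_sup_right (Ideal.mem_span_singleton'.mpr ⟨z, rfl⟩))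
      obtain ⟨j'', hj'', w'', hw'', hjw''⟩ := Submodule.mem_sup.mp (hc y h8)
      obtain ⟨v, hv⟩ := Ideal.mem_span_singleton'.mp hw''
      -- x = j + (j'' + v b) b^e
      refine Submodule.mem_sup.mpr ⟨j + j'' * b ^ e, ?_, v * b ^ (e + 1), ?_, ?_⟩
      · exact Submodule.add_mem _ hj (Ideal.mul_mem_right _ _ hj'')
      · exact Ideal.mem_span_singleton'.mpr ⟨v, rfl⟩
      · rw [← hjw, ← hy, ← hjw'', ← hv, pow_succ]; ring
    · -- tail
      have ha1 : RegL (J ⊔ Ideal.span {c}) (b :: l') := by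
        constructor
        · -- b NZD mod J ⊔ (c) via transNZD with list [c]
          have hreg2 : RegL J (b :: [c]) := ⟨hb, hc, trivial⟩
          have := regL_transNZD [c] J b hreg2
          intro x hx
          have hset : Ideal.span {y : A | y ∈ [c]} = Ideal.span {c} := by
            congr 1; ext z; simp
          rw [← hset]
          exact this x (by rw [hset]; exact hx)
        · rw [sup_right_comm]; exact hrest
      have ha2 : RegL (J ⊔ Ideal.span {c} ⊔ Ideal.span {b ^ e}) l' := by
        rw [sup_right_comm]; exact hrest_e
      have := ih (J ⊔ Ideal.span {c}) b e ha1 ha2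
      rw [sup_right_comm] at this
      exact this

lemma regL_core (l : List A) (J : Ideal A) (b : A) (h : RegL J (b :: l)) :
    ∀ e : ℕ, RegL (J ⊔ Ideal.span {b ^ (e + 1)}) l := by
  intro e
  induction e with
  | zero => rw [pow_one]; exact h.2
  | succ e ih => exact regL_coreStep l J b (e + 1) h ih

lemma regL_colon (q : ℕ) : ∀ (l : List A) (J : Ideal A), RegL J l →
    ∀ c : A, c * (l.map (fun x => x ^ q)).prod ∈
        J ⊔ Ideal.span {y | y ∈ l.map (fun x => x ^ (q + 1))} →
      c ∈ J ⊔ Ideal.span {y | y ∈ l} := by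
  intro l
  induction l with
  | nil =>
    intro J _ c hc
    simp only [List.map_nil] at hc
    rw [span_list_nil, sup_bot_eq] at hc ⊢
    simpa using hc
  | cons b l' ih =>
    intro J h c hc
    simp only [List.map_cons, List.prod_cons] at hc
    rw [span_list_cons, ← sup_assoc] at hc
    have hcore : RegL (J ⊔ Ideal.span {b ^ (q + 1)}) l' := regL_core l' J b h q
    have hih := ih (J ⊔ Ideal.span {b ^ (q + 1)}) hcore (c * b ^ q)
      (by rw [show c * b ^ q * (List.map (fun x => x ^ q) l').prod
            = c * (b ^ q * (List.map (fun x => x ^ q) l').prod) by ring]; exact hc)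
    rw [show J ⊔ Ideal.span {b ^ (q + 1)} ⊔ Ideal.span {y | y ∈ l'}
      = (J ⊔ Ideal.span {y | y ∈ l'}) ⊔ Ideal.span {b ^ (q + 1)} by
        rw [sup_right_comm]] at hih
    obtain ⟨u, hu, w, hw, huw⟩ := Submodule.mem_sup.mp hih
    obtain ⟨z, hz⟩ := Ideal.mem_span_singleton'.mp hw
    have hkey : (c - z * b) * b ^ q ∈ J ⊔ Ideal.span {y | y ∈ l'} := by
      have : (c - z * b) * b ^ q = u := by
        have : c * b ^ q = u + z * b ^ (q + 1) := by rw [← huw, hz]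
        rw [sub_mul, this, pow_succ]; ring
      rw [this]; exact hu
    have h9 := regL_transNZD_pow l' J b h q (c - z * b) hkey
    rw [span_list_cons, show J ⊔ (Ideal.span {b} ⊔ Ideal.span {y | y ∈ l'})
      = (J ⊔ Ideal.span {y | y ∈ l'}) ⊔ Ideal.span {b} by
        rw [sup_assoc, sup_comm (Ideal.span {b})]]
    refine Submodule.mem_sup.mpr ⟨c - z * b, h9, z * b,
      Ideal.mem_span_singleton'.mpr ⟨z, rfl⟩, by ring⟩

end RegList2
section Bridge

variable {A : Type*} [CommRing A]

lemma regL_ofFn {n : ℕ} (a : Fin n → A)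
    (ha : ∀ i : Fin n, ∀ x : A,
      x * a i ∈ Ideal.span (a '' {j | j < i}) → x ∈ Ideal.span (a '' {j | j < i})) :
    RegL (⊥ : Ideal A) (List.ofFn a) := by
  have key : ∀ d k, k + d = n →
      RegL (Ideal.span (a '' {j | (j : ℕ) < k})) ((List.ofFn a).drop k) := by
    intro d
    induction d with
    | zero =>
      intro k hk
      have : (List.ofFn a).drop k = [] := by
        apply List.drop_of_length_le
        simp; omega
      rw [this]; trivial
    | succ d ih =>
      intro k hk
      have hkn : k < n := by omega
      have hdrop : (List.ofFn a).drop k = a ⟨k, hkn⟩ :: (List.ofFn a).drop (k + 1) := by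
        rw [List.drop_eq_getElem_cons (by simpa using hkn)]
        congr 1
        simp
      rw [hdrop]
      constructor
      · intro x hx
        have hset : {j : Fin n | j < ⟨k, hkn⟩} = {j : Fin n | (j : ℕ) < k} := by
          ext j; simp [Fin.lt_def]
        have := ha ⟨k, hkn⟩ x (by rw [hset]; exact hx)
        rwa [hset] at this
      · have hspan : Ideal.span (a '' {j | (j : ℕ) < k}) ⊔ Ideal.span {a ⟨k, hkn⟩}
            = Ideal.span (a '' {j | (j : ℕ) < k + 1}) := by
          rw [← Ideal.span_union]
          congr 1
          rw [show {j : Fin n | (j : ℕ) < k + 1} = {j : Fin n | (j : ℕ) < k} ∪ {⟨k, hkn⟩} by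
            ext j
            simp only [Set.mem_setOf_eq, Set.mem_union, Set.mem_singleton_iff, Fin.ext_iff]
            omega]
          rw [Set.image_union, Set.image_singleton]
        rw [hspan]
        exact ih (k + 1) (by omega)
  have := key n 0 (by omega)
  simpa using this

lemma colon_fin {n : ℕ} (a : Fin n → A)
    (ha : ∀ i : Fin n, ∀ x : A,
      x * a i ∈ Ideal.span (a '' {j | j < i}) → x ∈ Ideal.span (a '' {j | j < i}))
    (q : ℕ) (c : A)
    (h : c * ∏ i, a i ^ q ∈ Ideal.span (Set.range fun i => a i ^ (q + 1))) :
    c ∈ Ideal.span (Set.range a) := by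
  have hreg := regL_ofFn a ha
  have hcol := regL_colon q (List.ofFn a) ⊥ hreg c ?_
  · rw [bot_sup_eq] at hcol
    convert hcol using 2
    ext x
    simp [List.mem_ofFn, eq_comm]
  · rw [bot_sup_eq]
    have h1 : (List.map (fun x => x ^ q) (List.ofFn a)).prod = ∏ i, a i ^ q := by
      rw [List.map_ofFn]
      exact List.prod_ofFn
    have h2 : {y : A | y ∈ List.map (fun x => x ^ (q + 1)) (List.ofFn a)}
        = Set.range fun i => a i ^ (q + 1) := by
      rw [List.map_ofFn]
      ext x
      simp [List.mem_ofFn, Function.comp]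
    rw [h1, h2]
    exact h

end Bridge
section Phi

open MvPolynomial

variable {A : Type*} [CommRing A]

/-- The weight used to define the functional `Φ`. -/
noncomputable def Wt {n : ℕ} (p : ℕ) (a : Fin n → A) (m₀ : Fin n →₀ ℕ) (m : Fin n →₀ ℕ) : A :=
  if ∀ i, m i / p = m₀ i then ∏ i, (((m i % p).factorial : ℕ) : A) * a i ^ (p - 1 - m i % p)
  else 0

/-- The `A`-linear functional `Φ` on `A[x₁,…,xₙ]`. -/
noncomputable def PhiL {n : ℕ} (p : ℕ) (a : Fin n → A) (m₀ : Fin n →₀ ℕ) :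
    MvPolynomial (Fin n) A →ₗ[A] A :=
  Finsupp.linearCombination A (Wt p a m₀) ∘ₗ (AddMonoidAlgebra.coeffLinearEquiv A).toLinearMap

lemma PhiL_monomial {n : ℕ} (p : ℕ) (a : Fin n → A) (m₀ m : Fin n →₀ ℕ) (c : A) :
    PhiL p a m₀ (monomial m c) = c * Wt p a m₀ m := by
  change Finsupp.linearCombination A (Wt p a m₀) (AddMonoidAlgebra.coeffLinearEquiv A (monomial m c)) = _
  rw [show AddMonoidAlgebra.coeffLinearEquiv A (monomial m c) = Finsupp.single m c from rfl]
  exact Finsupp.linearCombination_single A c m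

end Phi
section PhiKey

open MvPolynomial

variable {A : Type*} [CommRing A]

lemma key_mem {n : ℕ} (p : ℕ) (hp : 0 < p) (hpA : ((p : ℕ) : A) = 0)
    (a : Fin n → A) (m₀ : Fin n →₀ ℕ) (i : Fin n) (m : Fin n →₀ ℕ) :
    ((m i : ℕ) : A) * Wt p a m₀ (m - Finsupp.single i 1) - a i * Wt p a m₀ m
      ∈ Ideal.span (Set.range fun j => a j ^ p) := by
  set K := Ideal.span (Set.range fun j => a j ^ p) with hK
  have hpow : ∀ j, a j ^ p ∈ K := fun j => Ideal.subset_span ⟨j, rfl⟩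
  set b := m i % p with hb
  have hbp : b < p := Nat.mod_lt _ hp
  have hm : p * (m i / p) + b = m i := Nat.div_add_mod (m i) p
  by_cases hb0 : b = 0
  · -- case p ∣ m i
    have hcast : ((m i : ℕ) : A) = 0 := by
      have : m i = p * (m i / p) := by omega
      rw [this, Nat.cast_mul, hpA, zero_mul]
    rw [hcast, zero_mul, zero_sub]
    refine neg_mem ?_
    unfold Wt
    split
    · next hcond =>
      rw [Finset.mul_prod_erase Finset.univ _ (Finset.mem_univ i) |>.symm]
      rw [← hb, hb0]
      simp only [Nat.factorial_zero, Nat.cast_one, one_mul, Nat.sub_zero]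
      rw [← mul_assoc, show a i * a i ^ (p - 1) = a i ^ p by
        rw [← pow_succ']; congr 1; omega]
      exact Ideal.mul_mem_right _ _ (hpow i)
    · rw [mul_zero]; exact zero_mem _
  · -- case ¬ p ∣ m i
    have hb1 : 1 ≤ b := Nat.one_le_iff_ne_zero.mpr hb0
    set m' : Fin n →₀ ℕ := m - Finsupp.single i 1 with hm'
    have hsub : ∀ j, m' j = if j = i then m i - 1 else m j := by
      intro j
      rw [hm', Finsupp.tsub_apply]
      by_cases hj : j = i
      · subst hj; simp
      · simp [Finsupp.single_apply, Ne.symm hj, hj]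
    have hmi1 : m i - 1 = p * (m i / p) + (b - 1) := by omega
    have hmod : (m i - 1) % p = b - 1 := by
      rw [hmi1, Nat.mul_add_mod]
      exact Nat.mod_eq_of_lt (by omega)
    have hdiv : (m i - 1) / p = m i / p := by
      rw [hmi1, Nat.mul_add_div hp]
      rw [show (b - 1) / p = 0 from Nat.div_eq_of_lt (by omega), add_zero]
    have hcond_iff : (∀ j, m' j / p = m₀ j) ↔ (∀ j, m j / p = m₀ j) := by
      apply forall_congr'
      intro j
      rw [hsub j]
      by_cases hj : j = i
      · subst hj; rw [if_pos rfl, hdiv]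
      · rw [if_neg hj]
    unfold Wt
    by_cases hcond : ∀ j, m j / p = m₀ j
    · rw [if_pos (hcond_iff.mpr hcond), if_pos hcond]
      have hcast : ((m i : ℕ) : A) = ((b : ℕ) : A) := by
        conv_lhs => rw [← hm]
        rw [Nat.cast_add, Nat.cast_mul, hpA, zero_mul, zero_add]
      rw [hcast]
      rw [Finset.mul_prod_erase Finset.univ _ (Finset.mem_univ i) |>.symm,
        Finset.mul_prod_erase Finset.univ
          (fun j => (((m j % p).factorial : ℕ) : A) * a j ^ (p - 1 - m j % p))
          (Finset.mem_univ i) |>.symm]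
      have hrest : ∀ j ∈ Finset.univ.erase i,
          ((((m' j % p).factorial : ℕ) : A) * a j ^ (p - 1 - m' j % p))
          = (((m j % p).factorial : ℕ) : A) * a j ^ (p - 1 - m j % p) := by
        intro j hj
        rw [hsub j, if_neg (Finset.mem_erase.mp hj).1]
      rw [Finset.prod_congr rfl hrest]
      rw [hsub i, if_pos rfl, hmod]
      set R := ∏ j ∈ Finset.univ.erase i, (((m j % p).factorial : ℕ) : A) * a j ^ (p - 1 - m j % p)
      have e1 : (b : A) * ((((b - 1).factorial : ℕ) : A) * a i ^ (p - 1 - (b - 1)) * R)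
          = a i * ((((b.factorial : ℕ) : A)) * a i ^ (p - 1 - b) * R) := by
        have hf : (b : ℕ) * (b - 1).factorial = b.factorial := Nat.mul_factorial_pred hb0
        have hpow : a i * a i ^ (p - 1 - b) = a i ^ (p - 1 - (b - 1)) := by
          rw [← pow_succ']; congr 1; omega
        calc (b : A) * ((((b - 1).factorial : ℕ) : A) * a i ^ (p - 1 - (b - 1)) * R)
            = (((b * (b - 1).factorial : ℕ) : A)) * (a i ^ (p - 1 - (b - 1)) * R) := by
              push_cast; ring
          _ = ((b.factorial : ℕ) : A) * ((a i * a i ^ (p - 1 - b)) * R) := by rw [hf, hpow]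
          _ = a i * ((((b.factorial : ℕ) : A)) * a i ^ (p - 1 - b) * R) := by ring
      rw [← hb]
      rw [e1, sub_self]
      exact zero_mem _
    · rw [if_neg (fun h => hcond (hcond_iff.mp h)), if_neg hcond]
      rw [mul_zero, mul_zero, sub_zero]
      exact zero_mem _

end PhiKey
section PhiD

open MvPolynomial

variable {A : Type*} [CommRing A]

lemma PhiL_D_mem {n : ℕ} (p : ℕ) (hp : 0 < p) (hpA : ((p : ℕ) : A) = 0)
    (a : Fin n → A) (m₀ : Fin n →₀ ℕ) (i : Fin n) (g : MvPolynomial (Fin n) A) :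
    PhiL p a m₀ (pderiv i g - C (a i) * g) ∈ Ideal.span (Set.range fun j => a j ^ p) := by
  induction g using MvPolynomial.induction_on' with
  | monomial m c =>
    rw [pderiv_monomial, C_mul_monomial, map_sub, PhiL_monomial, PhiL_monomial]
    have : c * (m i : A) * Wt p a m₀ (m - Finsupp.single i 1) - a i * c * Wt p a m₀ m
        = c * (((m i : ℕ) : A) * Wt p a m₀ (m - Finsupp.single i 1) - a i * Wt p a m₀ m) := by
      ring
    rw [this]
    exact Ideal.mul_mem_left _ c (key_mem p hp hpA a m₀ i m)
  | add f g hf hg =>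
    have : pderiv i (f + g) - C (a i) * (f + g)
        = (pderiv i f - C (a i) * f) + (pderiv i g - C (a i) * g) := by
      rw [map_add]; ring
    rw [this, map_add]
    exact add_mem hf hg

lemma Wt_smul {n : ℕ} (p : ℕ) (hp : 0 < p) (a : Fin n → A) (m₀ m : Fin n →₀ ℕ) :
    Wt p a m₀ (p • m) = if m = m₀ then ∏ i, a i ^ (p - 1) else 0 := by
  unfold Wt
  have happ : ∀ i, (p • m) i = p * m i := fun i => by
    rw [Finsupp.smul_apply, smul_eq_mul]
  have hdiv : ∀ i, (p • m) i / p = m i := fun i => by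
    rw [happ, Nat.mul_div_cancel_left _ hp]
  have hmod : ∀ i, (p • m) i % p = 0 := fun i => by
    rw [happ]; exact Nat.mul_mod_right p _
  have hcond : (∀ i, (p • m) i / p = m₀ i) ↔ m = m₀ := by
    simp only [hdiv]
    exact ⟨fun h => Finsupp.ext h, fun h i => by rw [h]⟩
  by_cases h : m = m₀
  · rw [if_pos (hcond.mpr h), if_pos h]
    refine Finset.prod_congr rfl fun i _ => ?_
    rw [hmod i]
    simp [Nat.factorial]
  · rw [if_neg (fun hh => h (hcond.mp hh)), if_neg h]

end PhiD
open MvPolynomial in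
/-- Corollary of the crucial lemma: in characteristic `p > 0`, if `f^p ∈ ImD` then each
`p`-th power of a coefficient of `f` lies in the ideal generated by `a₁,…,aₙ`. -/
theorem stmt_17 {k A : Type*} [Field k] [CommRing A] [Algebra k A]
    (p : ℕ) (hp : p.Prime) [CharP k p] {n : ℕ} (a : Fin n → A) (ha : IsRegSeq a)
    (f : MvPolynomial (Fin n) A) (hf : f ^ p ∈ ImD a) :
    ∀ m : Fin n →₀ ℕ, (f.coeff m) ^ p ∈ Ideal.span (Set.range a) := by
  intro m₀
  rcases subsingleton_or_nontrivial A with hA | hA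
  · have : (f.coeff m₀) ^ p = 0 := Subsingleton.elim _ _
    rw [this]; exact zero_mem _
  · haveI : CharP A p := charP_of_injective_algebraMap (algebraMap k A).injective p
    haveI : Fact p.Prime := ⟨hp⟩
    have hpA : ((p : ℕ) : A) = 0 := CharP.cast_eq_zero A p
    obtain ⟨g, hg⟩ := hf
    set K := Ideal.span (Set.range fun j => a j ^ p) with hK
    have hPhi : PhiL p a m₀ (f ^ p) ∈ K := by
      rw [hg, map_sum]
      exact Submodule.sum_mem _ fun i _ => PhiL_D_mem p hp.pos hpA a m₀ i (g i)
    have hfp : f ^ p = ∑ m ∈ f.support, monomial (p • m) (f.coeff m ^ p) := by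
      conv_lhs => rw [← f.support_sum_monomial_coeff]
      rw [sum_pow_char]
      exact Finset.sum_congr rfl fun m _ => by rw [monomial_pow]
    rw [hfp, map_sum] at hPhi
    have hterm : ∀ m ∈ f.support, PhiL p a m₀ (monomial (p • m) (f.coeff m ^ p))
        = if m = m₀ then f.coeff m₀ ^ p * ∏ i, a i ^ (p - 1) else 0 := by
      intro m _
      rw [PhiL_monomial, Wt_smul p hp.pos]
      split
      · next h => rw [h]
      · rw [mul_zero]
    rw [Finset.sum_congr rfl hterm, Finset.sum_ite_eq' f.support m₀] at hPhi
    by_cases hmem : m₀ ∈ f.support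
    · rw [if_pos hmem] at hPhi
      refine colon_fin a ha.1 (p - 1) (f.coeff m₀ ^ p) ?_
      rw [show p - 1 + 1 = p from by have := hp.pos; omega]
      exact hPhi
    · rw [MvPolynomial.notMem_support_iff.mp hmem, zero_pow hp.ne_zero]
      exact zero_mem _
end
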